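/- arXiv:math/0503012 — 4 statements merged into one kernel-verified Lean document; each statement's English description precedes it below -/
import Mathlib

section
/- Let A be an abelian group and let X, Y be finite multisets of finite sequences over A (possibly X = Y) such that f_γ^r(X) = f_γ^r(Y) for every r ≥ 0 and every γ ∈ A. Then for all α, β ∈ A, every r ≥ 0, and every γ ∈ A: (1) f_γ^r(R_{α,β}(X)) = f_γ^r(R_{α,β}(Y)), and (2) f_γ^r(R_{α,β}(X)) = f_γ^r(R_{β,α}(Y)). -/
/-- The map `R_{α,β,i}` (for `1 ≤ i ≤ l`) sending `(x_1, …, x_l)` to the sequence of length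
`l+2` consisting of `x_i`, then `x_1, …, x_i` each increased by `x_i - x_1 + α`, then
`x_i, …, x_l` each increased by `x_i - x_1 + β`. -/
def Rmap {A : Type*} [AddCommGroup A] (α β : A) (i : ℕ) (u : List A) : List A :=
  u.getD (i - 1) 0 ::
    ((u.take i).map (fun y => y + (u.getD (i - 1) 0 - u.getD 0 0 + α)) ++
     (u.drop (i - 1)).map (fun y => y + (u.getD (i - 1) 0 - u.getD 0 0 + β)))

/-- The multiset `R_{α,β}(u) = {R_{α,β,i}(u) : 1 ≤ i ≤ l}` of `l` sequences of length `l+2`. -/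
def RMulti {A : Type*} [AddCommGroup A] (α β : A) (u : List A) : Multiset (List A) :=
  (Finset.range u.length).val.map fun i => Rmap α β (i + 1) u

/-- `fStat γ r u` is the multiset `f_γ^r(u) = {x_{a_1} + ⋯ + x_{a_r} - (r-1)·x_1 + γ}` over all
weakly increasing `r`-tuples `1 ≤ a_1 ≤ ⋯ ≤ a_r ≤ l` (equivalently, all size-`r` multisets of
indices), counted with multiplicity. -/
def fStat {A : Type*} [AddCommGroup A] (γ : A) (r : ℕ) (u : List A) : Multiset A :=
  ((Finset.range u.length).sym r).val.map fun m =>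
    (m.toMultiset.map fun i => u.getD i 0).sum - ((r : ℤ) - 1) • u.getD 0 0 + γ

/-!
Index the terms of `f_γ^r(R_{α,β,i}(u))` by the multiset `m` of the `r` positions of
`R_{α,β,i}(u)` they add up. Splitting `m` into `c` copies of the leading entry `x_i`, a
multiset `J` of `a` positions in the `α`-block and a multiset `K` of `b` positions in the
`β`-block, the term equals the term of `f^{a+b+1}_{γ+aα+bβ}(u)` indexed by `J + {i} + K`, and
`(i, m)` is recovered from `(a, b, J + {i} + K)`: `i` is the `a`-th smallest index and
`c = r - a - b`. Hence `f_γ^r(R_{α,β}(u)) = ∑_{a+b ≤ r} f^{a+b+1}_{γ+aα+bβ}(u)`, which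
depends on `u` only through its statistics and is invariant under swapping `α, β` together
with `a, b`.
-/

def symMultisets {α : Type*} [DecidableEq α] (s : Finset α) (n : ℕ) : Finset (Multiset α) :=
  (s.sym n).map ⟨Sym.toMultiset, Sym.coe_injective⟩

theorem mem_symMultisets {α : Type*} [DecidableEq α] {s : Finset α} {n : ℕ} {M : Multiset α} :
    M ∈ symMultisets s n ↔ M.card = n ∧ ∀ a ∈ M, a ∈ s := by
  constructor
  · intro hM
    obtain ⟨m, hm, rfl⟩ := Finset.mem_map.1 hM
    exact ⟨m.2, Finset.mem_sym_iff.1 hm⟩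
  · rintro ⟨hc, hs⟩
    exact Finset.mem_map.2 ⟨⟨M, hc⟩, Finset.mem_sym_iff.2 hs, rfl⟩

theorem Finset.val_map_eq_sum_singleton {ι β : Type*} (s : Finset ι) (g : ι → β) :
    s.val.map g = ∑ x ∈ s, {g x} := by
  rw [Finset.sum_eq_multiset_sum, ← Multiset.sum_map_singleton (s.val.map g), Multiset.map_map]
  rfl

theorem Multiset.bind_finset_sum {α β ι : Type*} (X : Multiset α) (s : Finset ι)
    (F : ι → α → Multiset β) :
    X.bind (fun a => ∑ i ∈ s, F i a) = ∑ i ∈ s, X.bind (F i) := by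
  classical
  induction s using Finset.induction_on with
  | empty => simp
  | insert i s hi ih => simp [Finset.sum_insert hi, ih]

theorem List.rel_getElem_of_mem_take_of_mem_drop {α : Type*} {R : α → α → Prop} {L : List α}
    (hL : L.Pairwise R) {a : ℕ} (ha : a < L.length) :
    (∀ x ∈ L.take a, R x L[a]) ∧ ∀ y ∈ L.drop (a + 1), R L[a] y := by
  rw [← List.take_append_drop a L, List.drop_eq_getElem_cons ha, List.pairwise_append,
    List.pairwise_cons] at hL
  exact ⟨fun x hx => hL.2.2 x hx _ List.mem_cons_self, hL.2.1.1⟩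

theorem Multiset.sort_cons_add {α : Type*} [LinearOrder α] {i : α} {J K : Multiset α}
    (hJ : ∀ j ∈ J, j ≤ i) (hK : ∀ k ∈ K, i ≤ k) : (i ::ₘ (J + K)).sort = J.sort ++ i :: K.sort := by
  refine List.Perm.eq_of_pairwise' (Multiset.pairwise_sort _ _) ?_ ?_
  · rw [List.pairwise_append, List.pairwise_cons]
    refine ⟨Multiset.pairwise_sort _ _, ⟨fun k hk => hK k ((Multiset.mem_sort _).1 hk),
      Multiset.pairwise_sort _ _⟩, fun j hj k hk => ?_⟩
    have hji := hJ j ((Multiset.mem_sort _).1 hj)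
    rcases List.mem_cons.1 hk with rfl | hk
    · exact hji
    · exact hji.trans (hK k ((Multiset.mem_sort _).1 hk))
  · rw [← Multiset.coe_eq_coe, Multiset.sort_eq, ← Multiset.coe_add, ← Multiset.cons_coe,
      Multiset.sort_eq, Multiset.sort_eq, Multiset.add_cons]

def pairsSumLe (r : ℕ) : Finset (ℕ × ℕ) :=
  (Finset.range (r + 1) ×ˢ Finset.range (r + 1)).filter fun p => p.1 + p.2 ≤ r

theorem mem_pairsSumLe {r : ℕ} {p : ℕ × ℕ} : p ∈ pairsSumLe r ↔ p.1 + p.2 ≤ r := by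
  simp only [pairsSumLe, Finset.mem_filter, Finset.mem_product, Finset.mem_range]
  omega

theorem List.getElem_cons_take_add_drop {α : Type*} (L : List α) {a : ℕ} (ha : a < L.length) :
    (L[a] ::ₘ ((L.take a : Multiset α) + (L.drop (a + 1) : Multiset α))) = L := by
  conv_rhs => rw [← List.take_append_drop a L, List.drop_eq_getElem_cons ha]
  rw [← Multiset.coe_add, ← Multiset.cons_coe, Multiset.add_cons]

/-- Positions in `Rmap α β (i + 1) u`: `0` holds `x_i`, `j + 1` (for `j ≤ i`) the `α`-shifted
`x_j`, and `k + 2` (for `i ≤ k`) the `β`-shifted `x_k`. -/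
def blockPositions (c : ℕ) (J K : Multiset ℕ) : Multiset ℕ :=
  Multiset.replicate c 0 + J.map (· + 1) + K.map (· + 2)

def lowBlock (i : ℕ) (m : Multiset ℕ) : Multiset ℕ :=
  (m.filter fun p => 0 < p ∧ p < i + 2).map (· - 1)

def highBlock (i : ℕ) (m : Multiset ℕ) : Multiset ℕ :=
  (m.filter fun p => i + 2 ≤ p).map (· - 2)

theorem card_blockPositions (c : ℕ) (J K : Multiset ℕ) :
    (blockPositions c J K).card = c + J.card + K.card := by
  simp [blockPositions]

theorem blockPositions_lowBlock_highBlock (i : ℕ) (m : Multiset ℕ) :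
    blockPositions (m.count 0) (lowBlock i m) (highBlock i m) = m := by
  have hlow : (lowBlock i m).map (· + 1) = m.filter fun p => 0 < p ∧ p < i + 2 := by
    rw [lowBlock, Multiset.map_map]
    refine (Multiset.map_congr rfl fun p hp => ?_).trans (Multiset.map_id _)
    have := (Multiset.mem_filter.1 hp).2
    simp only [Function.comp_apply, id_eq]
    omega
  have hhigh : (highBlock i m).map (· + 2) = m.filter fun p => i + 2 ≤ p := by
    rw [highBlock, Multiset.map_map]
    refine (Multiset.map_congr rfl fun p hp => ?_).trans (Multiset.map_id _)
    have := (Multiset.mem_filter.1 hp).2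
    simp only [Function.comp_apply, id_eq]
    omega
  rw [blockPositions, hlow, hhigh, ← Multiset.filter_eq']
  ext p
  simp only [Multiset.count_add, Multiset.count_filter]
  split_ifs <;> omega

theorem lowBlock_blockPositions {i c : ℕ} {J K : Multiset ℕ} (hJ : ∀ j ∈ J, j ≤ i)
    (hK : ∀ k ∈ K, i ≤ k) : lowBlock i (blockPositions c J K) = J := by
  have hK' : K.filter (· < i) = 0 := Multiset.filter_eq_nil.2 fun k hk => (hK k hk).not_gt
  simp [lowBlock, blockPositions, Multiset.filter_map, Multiset.filter_eq_self.2 hJ, hK',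
    Multiset.filter_eq_nil, Multiset.mem_replicate]

theorem highBlock_blockPositions {i c : ℕ} {J K : Multiset ℕ} (hJ : ∀ j ∈ J, j ≤ i)
    (hK : ∀ k ∈ K, i ≤ k) : highBlock i (blockPositions c J K) = K := by
  have hJ' : J.filter (i < ·) = 0 := Multiset.filter_eq_nil.2 fun j hj => (hJ j hj).not_gt
  simp [highBlock, blockPositions, Multiset.filter_map, Multiset.filter_eq_self.2 hK, hJ',
    Multiset.filter_eq_nil, Multiset.mem_replicate]

theorem lowBlock_le {i j : ℕ} {m : Multiset ℕ} (hj : j ∈ lowBlock i m) : j ≤ i := by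
  obtain ⟨p, hp, rfl⟩ := Multiset.mem_map.1 hj
  have := (Multiset.mem_filter.1 hp).2
  omega

theorem le_highBlock {i k : ℕ} {m : Multiset ℕ} (hk : k ∈ highBlock i m) : i ≤ k := by
  obtain ⟨p, hp, rfl⟩ := Multiset.mem_map.1 hk
  have := (Multiset.mem_filter.1 hp).2
  omega

theorem highBlock_lt {i k l : ℕ} {m : Multiset ℕ} (hm : ∀ p ∈ m, p < l + 2)
    (hk : k ∈ highBlock i m) : k < l := by
  obtain ⟨p, hp, rfl⟩ := Multiset.mem_map.1 hk
  have := hm p (Multiset.mem_filter.1 hp).1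
  have := (Multiset.mem_filter.1 hp).2
  omega

def positionSet (l r : ℕ) : Finset ((_ : ℕ) × Multiset ℕ) :=
  (Finset.range l).sigma fun _ => symMultisets (Finset.range (l + 2)) r

def splitIndexSet (l r : ℕ) : Finset ((_ : ℕ × ℕ) × Multiset ℕ) :=
  (pairsSumLe r).sigma fun p => symMultisets (Finset.range l) (p.1 + p.2 + 1)

theorem mem_positionSet {l r : ℕ} {q : (_ : ℕ) × Multiset ℕ} :
    q ∈ positionSet l r ↔ q.1 < l ∧ q.2.card = r ∧ ∀ p ∈ q.2, p < l + 2 := by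
  simp [positionSet, mem_symMultisets]

theorem mem_splitIndexSet {l r : ℕ} {q : (_ : ℕ × ℕ) × Multiset ℕ} :
    q ∈ splitIndexSet l r ↔
      q.1.1 + q.1.2 ≤ r ∧ q.2.card = q.1.1 + q.1.2 + 1 ∧ ∀ k ∈ q.2, k < l := by
  simp [splitIndexSet, mem_symMultisets, mem_pairsSumLe]

def indicesOfPositions (q : (_ : ℕ) × Multiset ℕ) : (_ : ℕ × ℕ) × Multiset ℕ :=
  ⟨((lowBlock q.1 q.2).card, (highBlock q.1 q.2).card),
    q.1 ::ₘ (lowBlock q.1 q.2 + highBlock q.1 q.2)⟩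

/-- The split index `i` is the `a`-th smallest element of `M`. -/
def positionsOfIndices (r : ℕ) (q : (_ : ℕ × ℕ) × Multiset ℕ) :
    (_ : ℕ) × Multiset ℕ :=
  ⟨q.2.sort.getD q.1.1 0,
    blockPositions (r - (q.1.1 + q.1.2)) (q.2.sort.take q.1.1) (q.2.sort.drop (q.1.1 + 1))⟩

theorem count_zero_add_card_lowBlock_add_card_highBlock (i : ℕ) (m : Multiset ℕ) :
    m.count 0 + (lowBlock i m).card + (highBlock i m).card = m.card := by
  conv_rhs => rw [← blockPositions_lowBlock_highBlock i m]
  rw [card_blockPositions]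

theorem indicesOfPositions_mem {l r : ℕ} {q : (_ : ℕ) × Multiset ℕ}
    (hq : q ∈ positionSet l r) : indicesOfPositions q ∈ splitIndexSet l r := by
  obtain ⟨i, m⟩ := q
  obtain ⟨hi, hcard, hm⟩ : i < l ∧ m.card = r ∧ ∀ p ∈ m, p < l + 2 :=
    mem_positionSet.1 hq
  have := count_zero_add_card_lowBlock_add_card_highBlock i m
  refine mem_splitIndexSet.2
    ⟨by dsimp only [indicesOfPositions]; omega, by simp [indicesOfPositions], ?_⟩
  simp only [indicesOfPositions, Multiset.mem_cons, Multiset.mem_add]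
  rintro k (rfl | hk | hk)
  · exact hi
  · exact (lowBlock_le hk).trans_lt hi
  · exact highBlock_lt hm hk

theorem positionsOfIndices_mem {l r : ℕ} {q : (_ : ℕ × ℕ) × Multiset ℕ}
    (hq : q ∈ splitIndexSet l r) : positionsOfIndices r q ∈ positionSet l r := by
  obtain ⟨⟨a, b⟩, M⟩ := q
  obtain ⟨hab, hcard, hM⟩ : a + b ≤ r ∧ M.card = a + b + 1 ∧ ∀ k ∈ M, k < l :=
    mem_splitIndexSet.1 hq
  have hlen : M.sort.length = a + b + 1 := by rw [Multiset.length_sort, hcard]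
  have hsort : ∀ k ∈ M.sort, k < l := fun k hk => hM k ((Multiset.mem_sort _).1 hk)
  refine mem_positionSet.2 ⟨?_, ?_, ?_⟩
  · show M.sort.getD a 0 < l
    rw [List.getD_eq_getElem _ _ (by omega)]
    exact hsort _ (List.getElem_mem _)
  · simp only [positionsOfIndices, card_blockPositions, Multiset.coe_card, List.length_take,
      List.length_drop, hlen]
    omega
  · simp only [positionsOfIndices, blockPositions, Multiset.mem_add, Multiset.mem_map,
      Multiset.mem_coe]
    rintro p ((hp | ⟨k, hk, rfl⟩) | ⟨k, hk, rfl⟩)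
    · rw [Multiset.eq_of_mem_replicate hp]; omega
    · have := hsort k (List.mem_of_mem_take hk); omega
    · have := hsort k (List.mem_of_mem_drop hk); omega

theorem positionsOfIndices_indicesOfPositions {l r : ℕ} {q : (_ : ℕ) × Multiset ℕ}
    (hq : q ∈ positionSet l r) : positionsOfIndices r (indicesOfPositions q) = q := by
  obtain ⟨i, m⟩ := q
  have hcard : m.card = r := (mem_positionSet.1 hq).2.1
  have hcount := count_zero_add_card_lowBlock_add_card_highBlock i m
  dsimp only [positionsOfIndices, indicesOfPositions]
  set J := lowBlock i m
  set K := highBlock i m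
  have hsort : (i ::ₘ (J + K)).sort = J.sort ++ i :: K.sort :=
    Multiset.sort_cons_add (fun j hj => lowBlock_le hj) (fun k hk => le_highBlock hk)
  have hlen : J.sort.length = J.card := Multiset.length_sort _
  have hget : (J.sort ++ i :: K.sort).getD J.card 0 = i := by
    rw [List.getD_append_right _ _ _ _ hlen.le, hlen, Nat.sub_self]
    rfl
  have htake : (J.sort ++ i :: K.sort).take J.card = J.sort := List.take_left' hlen
  have hdrop : (J.sort ++ i :: K.sort).drop (J.card + 1) = K.sort := by
    rw [← List.drop_drop, List.drop_left' hlen]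
    rfl
  have hzero : r - (J.card + K.card) = m.count 0 := by omega
  rw [hsort, hget, htake, hdrop, hzero, Multiset.sort_eq, Multiset.sort_eq]
  exact congrArg _ (blockPositions_lowBlock_highBlock i m)

theorem indicesOfPositions_positionsOfIndices {l r : ℕ} {q : (_ : ℕ × ℕ) × Multiset ℕ}
    (hq : q ∈ splitIndexSet l r) : indicesOfPositions (positionsOfIndices r q) = q := by
  obtain ⟨⟨a, b⟩, M⟩ := q
  have hcard : M.card = a + b + 1 := (mem_splitIndexSet.1 hq).2.1
  have hlen : M.sort.length = a + b + 1 := by rw [Multiset.length_sort, hcard]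
  have ha : a < M.sort.length := by omega
  obtain ⟨htake, hdrop⟩ :=
    List.rel_getElem_of_mem_take_of_mem_drop (Multiset.pairwise_sort M _) ha
  have hJ : ∀ j ∈ (M.sort.take a : Multiset ℕ), j ≤ M.sort[a] := htake
  have hK : ∀ k ∈ (M.sort.drop (a + 1) : Multiset ℕ), M.sort[a] ≤ k := hdrop
  simp only [positionsOfIndices, indicesOfPositions, List.getD_eq_getElem _ _ ha,
    lowBlock_blockPositions hJ hK, highBlock_blockPositions hJ hK, List.getElem_cons_take_add_drop]
  simp [hlen]
  omega

section Statistics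

variable {A : Type*} [AddCommGroup A]

def fStatTerm (γ : A) (r : ℕ) (u : List A) (M : Multiset ℕ) : A :=
  (M.map fun i => u.getD i 0).sum - ((r : ℤ) - 1) • u.getD 0 0 + γ

theorem fStat_eq_sum_fStatTerm (γ : A) (r : ℕ) (u : List A) :
    fStat γ r u = ∑ M ∈ symMultisets (Finset.range u.length) r, {fStatTerm γ r u M} := by
  rw [symMultisets, Finset.sum_map, ← Finset.val_map_eq_sum_singleton]
  rfl

theorem Rmap_length (α β : A) {i : ℕ} {u : List A} (hi : i < u.length) :
    (Rmap α β (i + 1) u).length = u.length + 2 := by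
  simp only [Rmap, List.length_cons, List.length_append, List.length_map, List.length_take,
    List.length_drop]
  omega

theorem Rmap_getD_zero (α β : A) (i : ℕ) (u : List A) :
    (Rmap α β (i + 1) u).getD 0 0 = u.getD i 0 := by
  simp [Rmap]

theorem Rmap_getD_succ (α β : A) {i j : ℕ} {u : List A} (hi : i < u.length) (hj : j ≤ i) :
    (Rmap α β (i + 1) u).getD (j + 1) 0 = u.getD j 0 + (u.getD i 0 - u.getD 0 0 + α) := by
  have hj' : j < u.length := by omega
  simp [Rmap, List.getD_eq_getElem?_getD, List.getElem?_append_left, hj', Nat.lt_succ_of_le hj]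

theorem Rmap_getD_add_two (α β : A) {i k : ℕ} {u : List A} (hik : i ≤ k) (hk : k < u.length) :
    (Rmap α β (i + 1) u).getD (k + 2) 0 = u.getD k 0 + (u.getD i 0 - u.getD 0 0 + β) := by
  have hk' : i + 1 ≤ k + 1 := by omega
  simp [Rmap, List.getD_eq_getElem?_getD, List.getElem?_append_right, hk', hk,
    show min (i + 1) u.length = i + 1 by omega, Nat.add_sub_cancel' hik]

theorem fStatTerm_Rmap_blockPositions (α β γ : A) {u : List A} {i : ℕ} (hi : i < u.length)
    (c : ℕ) {J K : Multiset ℕ} (hJ : ∀ j ∈ J, j ≤ i) (hK : ∀ k ∈ K, i ≤ k ∧ k < u.length) :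
    fStatTerm γ (c + J.card + K.card) (Rmap α β (i + 1) u) (blockPositions c J K) =
      fStatTerm (γ + J.card • α + K.card • β) (J.card + K.card + 1) u (i ::ₘ (J + K)) := by
  have hJmap : J.map (fun j => (Rmap α β (i + 1) u).getD (j + 1) 0) =
      J.map fun j => u.getD j 0 + (u.getD i 0 - u.getD 0 0 + α) :=
    Multiset.map_congr rfl fun j hj => Rmap_getD_succ α β hi (hJ j hj)
  have hKmap : K.map (fun k => (Rmap α β (i + 1) u).getD (k + 2) 0) =
      K.map fun k => u.getD k 0 + (u.getD i 0 - u.getD 0 0 + β) :=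
    Multiset.map_congr rfl fun k hk => Rmap_getD_add_two α β (hK k hk).1 (hK k hk).2
  simp only [fStatTerm, blockPositions, Multiset.map_add, Multiset.map_replicate, Multiset.map_map,
    Function.comp_def, hJmap, hKmap, Multiset.sum_add, Multiset.sum_replicate,
    Multiset.sum_map_add, Multiset.map_const', Rmap_getD_zero, Multiset.map_cons,
    Multiset.sum_cons]
  push_cast
  module

theorem sum_fStatTerm_Rmap_eq_sum_fStatTerm (α β γ : A) (r : ℕ) (u : List A) :
    ∑ q ∈ positionSet u.length r, ({fStatTerm γ r (Rmap α β (q.1 + 1) u) q.2} : Multiset A) =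
      ∑ q ∈ splitIndexSet u.length r,
        {fStatTerm (γ + q.1.1 • α + q.1.2 • β) (q.1.1 + q.1.2 + 1) u q.2} := by
  refine Finset.sum_nbij' indicesOfPositions (positionsOfIndices r)
    (fun _ => indicesOfPositions_mem) (fun _ => positionsOfIndices_mem)
    (fun _ => positionsOfIndices_indicesOfPositions)
    (fun _ => indicesOfPositions_positionsOfIndices) ?_
  rintro ⟨i, m⟩ hq
  obtain ⟨hi, hcard, hm⟩ : i < u.length ∧ m.card = r ∧ ∀ p ∈ m, p < u.length + 2 :=
    mem_positionSet.1 hq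
  have hvalue := fStatTerm_Rmap_blockPositions α β γ hi (m.count 0) (J := lowBlock i m)
    (K := highBlock i m) (fun _ => lowBlock_le)
    (fun _ hk => ⟨le_highBlock hk, highBlock_lt hm hk⟩)
  rw [blockPositions_lowBlock_highBlock, count_zero_add_card_lowBlock_add_card_highBlock,
    hcard] at hvalue
  exact congrArg _ hvalue

theorem RMulti_bind_fStat (α β γ : A) (r : ℕ) (u : List A) :
    (RMulti α β u).bind (fStat γ r) =
      ∑ p ∈ pairsSumLe r, fStat (γ + p.1 • α + p.2 • β) (p.1 + p.2 + 1) u := by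
  calc (RMulti α β u).bind (fStat γ r)
      = ∑ i ∈ Finset.range u.length, fStat γ r (Rmap α β (i + 1) u) := by
        rw [RMulti, Multiset.bind_map, Finset.sum_eq_multiset_sum]
        rfl
    _ = ∑ q ∈ positionSet u.length r,
          ({fStatTerm γ r (Rmap α β (q.1 + 1) u) q.2} : Multiset A) := by
        rw [positionSet, Finset.sum_sigma]
        refine Finset.sum_congr rfl fun i hi => ?_
        rw [fStat_eq_sum_fStatTerm, Rmap_length α β (Finset.mem_range.1 hi)]
    _ = ∑ q ∈ splitIndexSet u.length r,
          {fStatTerm (γ + q.1.1 • α + q.1.2 • β) (q.1.1 + q.1.2 + 1) u q.2} :=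
        sum_fStatTerm_Rmap_eq_sum_fStatTerm α β γ r u
    _ = _ := by
        rw [splitIndexSet, Finset.sum_sigma]
        simp only [fStat_eq_sum_fStatTerm]

theorem bind_RMulti_bind_fStat (α β γ : A) (r : ℕ) (X : Multiset (List A)) :
    (X.bind (RMulti α β)).bind (fStat γ r) =
      ∑ p ∈ pairsSumLe r, X.bind (fStat (γ + p.1 • α + p.2 • β) (p.1 + p.2 + 1)) := by
  simp only [Multiset.bind_assoc, RMulti_bind_fStat, Multiset.bind_finset_sum]

end Statistics

/-- if the additively extended statistics `f_γ^r` agree on two multisets `X, Y`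
of sequences for all `r ≥ 0` and `γ ∈ A`, then for every `α, β ∈ A`, `r ≥ 0` and `γ ∈ A`,
(1) `f_γ^r(R_{α,β}(X)) = f_γ^r(R_{α,β}(Y))` and (2) `f_γ^r(R_{α,β}(X)) = f_γ^r(R_{β,α}(Y))`. -/
theorem fStat_RMulti_eq_of_fStat_eq {A : Type*} [AddCommGroup A] (X Y : Multiset (List A))
    (h : ∀ (r : ℕ) (γ : A), X.bind (fStat γ r) = Y.bind (fStat γ r))
    (α β : A) (r : ℕ) (γ : A) :
    (X.bind (RMulti α β)).bind (fStat γ r) = (Y.bind (RMulti α β)).bind (fStat γ r) ∧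
    (X.bind (RMulti α β)).bind (fStat γ r) = (Y.bind (RMulti β α)).bind (fStat γ r) := by
  have hXY :
      (X.bind (RMulti α β)).bind (fStat γ r) = (Y.bind (RMulti α β)).bind (fStat γ r) := by
    simp only [bind_RMulti_bind_fStat, h]
  refine ⟨hXY, hXY.trans ?_⟩
  rw [bind_RMulti_bind_fStat, bind_RMulti_bind_fStat]
  refine Finset.sum_equiv (Equiv.prodComm ℕ ℕ) (fun p => ?_) (fun p _ => ?_)
  · simp only [mem_pairsSumLe, Equiv.prodComm_apply, Prod.fst_swap, Prod.snd_swap, add_comm]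
  · simp only [Equiv.prodComm_apply, Prod.fst_swap, Prod.snd_swap, add_comm p.1 p.2,
      add_right_comm γ]
end

section
/- Let A be an abelian group, α, β ∈ A, and M, N matchings on [2n]. Then: (1) the multisets of values of s_{α,β} on T(M,l) and on T(N,l) are equal for all l ≥ 0 if and only if s_{α,β}(M) = s_{α,β}(N) and the sequences seq_{α,β}(M) and seq_{α,β}(N) are equal as multisets of terms; (2) the multiset of values of s_{α,β} on T(M,l) equals the multiset of values of s_{β,α} on T(N,l) for all l ≥ 0 if and only if s_{α,β}(M) = s_{β,α}(N) and seq_{α,β}(M) and seq_{β,α}(N) are equal as multisets of terms. -/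
/-!
Send values in `A` to the group algebra `ℕ[A]` by the universal additive character `ψ`; on
multisets this is injective. The children of `M` are the matchings `addFirst x M`, and
`seq_{α,β}(M) = (x₀, …, x_{2n})` lists the values of `s_{α,β}` on them, with `x₀ = s_{α,β}(M)`.
Hence the `ψ`-image `F_l` of the level `T(M, l)` is determined by `seq(M)` through
`F_{l+1}(x) = ∑_q F_l(R_{α,β,q+1}(x))`.

By induction on `l`, `F_l(x) = ψ(x₀) · Λ_l(∏ᵢ (1 - ψ(xᵢ - x₀) X)⁻¹)` for linear functionals `Λ_l`
on power series built from the divided difference `P ↦ (P(aX) - P(bX)) / ((a - b) X)`,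
`a = ψ α`, `b = ψ β`. The inductive step is the identity
`h_{k+m+1}(y) = ∑_q y_q h_k(y₀, …, y_q) h_m(y_q, …)` for complete homogeneous symmetric
functions. So `F_l(x)` depends only on `x₀`, on the multiset of the `xᵢ` and on the multiset
`{α, β}`; conversely, levels `0` and `1` recover `s_{α,β}(M)` and the multiset of terms of `seq(M)`.
-/

/-- Number of crossings of a matching given by its set of edges `(a, b)` with `a < b`:
unordered pairs of edges `e, f` with `min e < min f < max e < max f`. -/
def crStat (s : Finset (ℕ × ℕ)) : ℕ :=
  ((s ×ˢ s).filter fun p => p.1.1 < p.2.1 ∧ p.2.1 < p.1.2 ∧ p.1.2 < p.2.2).card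

/-- Number of nestings: unordered pairs of edges `e, f` with `min e < min f < max f < max e`. -/
def neStat (s : Finset (ℕ × ℕ)) : ℕ :=
  ((s ×ˢ s).filter fun p => p.1.1 < p.2.1 ∧ p.2.2 < p.1.2).card

/-- Number of camels (separated pairs): unordered pairs of edges `e, f` with `max e < min f`. -/
def caStat (s : Finset (ℕ × ℕ)) : ℕ :=
  ((s ×ˢ s).filter fun p => p.1.2 < p.2.1).card

/-- `s` is the edge set of a matching on `[2n] = {1, …, 2n}`: `n` edges `(a, b)` with
`a < b`, and every vertex of `[2n]` belongs to exactly one edge. -/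
def IsMatching (n : ℕ) (s : Finset (ℕ × ℕ)) : Prop :=
  s.card = n ∧
  (∀ e ∈ s, e.1 < e.2 ∧ 1 ≤ e.1 ∧ e.2 ≤ 2 * n) ∧
  (∀ v : ℕ, 1 ≤ v → v ≤ 2 * n → ∃! e, e ∈ s ∧ (v = e.1 ∨ v = e.2))

/-- The order isomorphism `[2n] → {2, …, 2n+2} \ {x}`. -/
def shiftV (x v : ℕ) : ℕ := if v + 1 < x then v + 1 else v + 2

/-- The matching on `[2n+2]` obtained from a matching on `[2n]` by relabeling its vertices
order-isomorphically as `{2, …, 2n+2} \ {x}` and adding the new first edge `{1, x}`. -/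
def addFirst (x : ℕ) (s : Finset (ℕ × ℕ)) : Finset (ℕ × ℕ) :=
  insert (1, x) (s.image fun e => (shiftV x e.1, shiftV x e.2))

/-- All matchings obtained from `s` by adding a new first edge in all possible ways. -/
def childrenM (s : Finset (ℕ × ℕ)) : Multiset (Finset (ℕ × ℕ)) :=
  (Finset.Icc 2 (2 * s.card + 2)).val.map fun x => addFirst x s

/-- `levelM s l` is the multiset `T(s, l)` of matchings obtained from `s` by `l` successive
additions of a new first edge in all possible ways. -/
def levelM (s : Finset (ℕ × ℕ)) : ℕ → Multiset (Finset (ℕ × ℕ))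
  | 0 => {s}
  | l + 1 => (levelM s l).bind childrenM

/-- `IsSeq α β s u` holds iff `u = seq_{α,β}(s)`: defined by `seq_{α,β}(∅) = (0)` and
`seq_{α,β}(N) = R_{α,β,x-1}(seq_{α,β}(M))` whenever `N` arises from `M` by adding the
first edge `{1, x}`. -/
inductive IsSeq {A : Type*} [AddCommGroup A] (α β : A) : Finset (ℕ × ℕ) → List A → Prop
  | empty : IsSeq α β ∅ [(0 : A)]
  | step (s : Finset (ℕ × ℕ)) (u : List A) (x : ℕ) (hu : IsSeq α β s u)
      (h2 : 2 ≤ x) (hx : x ≤ 2 * s.card + 2) :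
      IsSeq α β (addFirst x s) (Rmap α β (x - 1) u)


noncomputable section SymmetricFunctions

open Finset PowerSeries

variable {R : Type*} [CommSemiring R]

def geomSeries (x : R) : R⟦X⟧ := mk (x ^ ·)

def hSeries (s : Multiset R) : R⟦X⟧ := (s.map geomSeries).prod

def hsymm (s : Multiset R) (n : ℕ) : R := coeff n (hSeries s)

lemma hSeries_cons (x : R) (s : Multiset R) : hSeries (x ::ₘ s) = geomSeries x * hSeries s := by
  simp [hSeries]

lemma hSeries_add (s t : Multiset R) : hSeries (s + t) = hSeries s * hSeries t := by
  simp [hSeries]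

lemma hSeries_map_mul (c : R) (s : Multiset R) :
    hSeries (s.map (c * ·)) = rescale c (hSeries s) := by
  simp only [hSeries, map_multiset_prod, Multiset.map_map]
  congr 2
  funext x
  ext n
  simp [geomSeries, mul_pow]

lemma hsymm_zero (s : Multiset R) : hsymm s 0 = 1 := by
  rw [hsymm, coeff_zero_eq_constantCoeff_apply, hSeries, map_multiset_prod, Multiset.map_map]
  simp [Function.comp_def, geomSeries, constantCoeff_mk]

lemma hsymm_cons (x : R) (s : Multiset R) (n : ℕ) :
    hsymm (x ::ₘ s) n = ∑ i ∈ range (n + 1), x ^ i * hsymm s (n - i) := by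
  rw [hsymm, hSeries_cons, coeff_mul, Nat.sum_antidiagonal_eq_sum_range_succ_mk]
  simp [geomSeries, hsymm]

lemma hsymm_singleton (x : R) (n : ℕ) : hsymm {x} n = x ^ n := by
  simp [hsymm, hSeries, geomSeries]

lemma hsymm_pair (a b : R) (n : ℕ) :
    hsymm {a, b} n = ∑ p ∈ antidiagonal n, a ^ p.1 * b ^ p.2 := by
  simp [hsymm, hSeries, geomSeries, coeff_mul]

/-- Sort a monomial of degree `k + m + 1` in the `y_i` by index and split it at its
`(k + 1)`-st smallest index `q`. -/
lemma sum_getD_mul_hsymm_take_mul_hsymm_drop (y : List R) (k m : ℕ) :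
    ∑ q ∈ range y.length, y.getD q 0 * hsymm ↑(y.take (q + 1)) k * hsymm ↑(y.drop q) m
      = hsymm ↑y (k + m + 1) := by
  induction y generalizing k with
  | nil => simp [hsymm, hSeries, coeff_one]
  | cons z t ih =>
    have hfirst : ∑ q ∈ range t.length, t.getD q 0 * hsymm ↑(z :: t.take (q + 1)) k
        * hsymm ↑(t.drop q) m = ∑ c ∈ range (k + 1), z ^ c * hsymm ↑t (k - c + m + 1) := by
      simp only [← Multiset.cons_coe, hsymm_cons, mul_sum, sum_mul]
      rw [sum_comm]
      refine sum_congr rfl fun c _ => ?_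
      rw [← ih, mul_sum]
      exact sum_congr rfl fun q _ => by ring
    rw [List.length_cons, sum_range_succ']
    simp only [List.getD_cons_succ, List.drop_succ_cons, List.getD_cons_zero, zero_add,
      List.take_succ_cons, List.take_zero, List.drop_zero, hfirst]
    rw [Multiset.coe_singleton, hsymm_singleton, ← Multiset.cons_coe, hsymm_cons, hsymm_cons,
      show k + m + 1 + 1 = (k + 1) + (m + 1) by ring, sum_range_add _ (k + 1) (m + 1), mul_sum]
    -- powers `z ^ c` with `c ≤ k` come from the terms `q ≥ 1`, the others from `q = 0`
    congr 1
    · refine sum_congr rfl fun c hc => ?_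
      rw [show k - c + m + 1 = k + m + 1 - c by have := mem_range.mp hc; omega]
    · refine sum_congr rfl fun d _ => ?_
      rw [show k + m + 1 - (k + 1 + d) = m - d by omega]
      ring

/-- The divided difference `(P(aX) - P(bX)) / ((a - b) X)`, written without division. -/
def divDiff (a b : R) : R⟦X⟧ →ₗ[R] R⟦X⟧ where
  toFun P := mk fun j => hsymm {a, b} j * coeff (j + 1) P
  map_add' P Q := by ext; simp [mul_add]
  map_smul' c P := by ext; simp [mul_left_comm]

lemma divDiff_hSeries (a b : R) (y : List R) :
    divDiff a b (hSeries ↑y) = ∑ q ∈ range y.length,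
      y.getD q 0 • (rescale a (hSeries ↑(y.take (q + 1))) * rescale b (hSeries ↑(y.drop q))) := by
  ext j
  simp only [divDiff, LinearMap.coe_mk, AddHom.coe_mk, coeff_mk, hsymm_pair, map_sum,
    LinearMap.map_smul, coeff_mul, coeff_rescale, smul_eq_mul, mul_sum, sum_mul, ← hsymm.eq_1]
  rw [sum_comm]
  refine sum_congr rfl fun p hp => ?_
  rw [← HasAntidiagonal.mem_antidiagonal.mp hp, ← sum_getD_mul_hsymm_take_mul_hsymm_drop, mul_sum]
  exact sum_congr rfl fun q _ => by ring

def levelFunctional (a b : R) : ℕ → R⟦X⟧ →ₗ[R] R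
  | 0 => coeff 0
  | l + 1 => levelFunctional a b l ∘ₗ LinearMap.mulLeft R (geomSeries 1) ∘ₗ divDiff a b

lemma levelFunctional_congr {a b a' b' : R} (h : ({a, b} : Multiset R) = {a', b'}) (l : ℕ) :
    levelFunctional a b l = levelFunctional a' b' l := by
  have hD : divDiff a b = divDiff a' b' := by
    ext P : 1
    simp [divDiff, h]
  induction l with
  | zero => rfl
  | succ l ih => simp only [levelFunctional, ih, hD]

end SymmetricFunctions

noncomputable section LevelSum

open Finset PowerSeries

variable {A R : Type*} [AddCommGroup A] [CommSemiring R]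

def levelSum (ψ : AddChar A R) (α β : A) : ℕ → List A → R
  | 0, u => ψ (u.getD 0 0)
  | l + 1, u => ∑ q ∈ range u.length, levelSum ψ α β l (Rmap α β (q + 1) u)

def charRatios (ψ : AddChar A R) (u : List A) : List R := u.map fun x => ψ (x - u.getD 0 0)

lemma charRatios_Rmap (ψ : AddChar A R) (α β : A) (u : List A) (q : ℕ) :
    charRatios ψ (Rmap α β (q + 1) u) = 1 :: (((charRatios ψ u).take (q + 1)).map (ψ α * ·)
      ++ ((charRatios ψ u).drop q).map (ψ β * ·)) := by
  simp only [charRatios, Rmap, List.map_cons, List.map_append, List.map_map, List.map_take,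
    List.map_drop, List.getD_cons_zero, add_tsub_cancel_right, sub_self, AddChar.map_zero_eq_one]
  congr 3 <;> refine List.map_congr_left fun x _ => ?_ <;>
    simp only [Function.comp_apply, ← AddChar.map_add_eq_mul] <;> congr 1 <;> abel

theorem levelSum_eq_levelFunctional (ψ : AddChar A R) (α β : A) (l : ℕ) (u : List A) :
    levelSum ψ α β l u =
      ψ (u.getD 0 0) * levelFunctional (ψ α) (ψ β) l (hSeries ↑(charRatios ψ u)) := by
  induction l generalizing u with
  | zero => simp [levelSum, levelFunctional, ← hsymm.eq_1, hsymm_zero]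
  | succ l ih =>
    set y := charRatios ψ u
    have hlen : y.length = u.length := List.length_map _
    have hhead (q : ℕ) (hq : q < u.length) : ψ (u.getD q 0) = ψ (u.getD 0 0) * y.getD q 0 := by
      simp [y, charRatios, hq, ← AddChar.map_add_eq_mul]
    have hchild (q : ℕ) : hSeries ↑(charRatios ψ (Rmap α β (q + 1) u)) = geomSeries 1 *
        (rescale (ψ α) (hSeries ↑(y.take (q + 1))) * rescale (ψ β) (hSeries ↑(y.drop q))) := by
      rw [charRatios_Rmap, ← Multiset.cons_coe, ← Multiset.coe_add, hSeries_cons, hSeries_add,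
        ← Multiset.map_coe, ← Multiset.map_coe, hSeries_map_mul, hSeries_map_mul]
    calc levelSum ψ α β (l + 1) u
        = ∑ q ∈ range u.length, ψ (u.getD q 0) * levelFunctional (ψ α) (ψ β) l
            (hSeries ↑(charRatios ψ (Rmap α β (q + 1) u))) := by
          simp only [levelSum, ih]
          rfl
      _ = ψ (u.getD 0 0) * levelFunctional (ψ α) (ψ β) l (geomSeries 1 * ∑ q ∈ range y.length,
            y.getD q 0 • (rescale (ψ α) (hSeries ↑(y.take (q + 1))) *
              rescale (ψ β) (hSeries ↑(y.drop q)))) := by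
          simp only [mul_sum, map_sum, mul_smul_comm, map_smul, smul_eq_mul, hlen]
          refine sum_congr rfl fun q hq => ?_
          rw [hhead q (mem_range.mp hq), hchild]
          ring
      _ = _ := by
          rw [← divDiff_hSeries]
          rfl

lemma levelSum_congr (ψ : AddChar A R) {α β γ δ : A} (hpair : ({α, β} : Multiset A) = {γ, δ})
    {u v : List A} (hhead : u.getD 0 0 = v.getD 0 0) (hperm : (u : Multiset A) = v) (l : ℕ) :
    levelSum ψ α β l u = levelSum ψ γ δ l v := by
  have hψ : ({ψ α, ψ β} : Multiset R) = {ψ γ, ψ δ} := by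
    simpa using congrArg (Multiset.map ψ) hpair
  rw [levelSum_eq_levelFunctional, levelSum_eq_levelFunctional, levelFunctional_congr hψ,
    charRatios, charRatios, hhead, ← Multiset.map_coe, ← Multiset.map_coe, hperm]

lemma levelSum_one (ψ : AddChar A R) (α β : A) (u : List A) :
    levelSum ψ α β 1 u = ((u : Multiset A).map ψ).sum := by
  simp only [levelSum, Rmap, List.getD_cons_zero, add_tsub_cancel_right, Multiset.map_coe,
    Multiset.sum_coe]
  induction u with
  | nil => simp
  | cons x u ih =>
    rw [List.length_cons, sum_range_succ', List.map_cons, List.sum_cons, ← ih, add_comm]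
    rfl

end LevelSum

section AddFirst

open Finset

def PositiveEdges (s : Finset (ℕ × ℕ)) : Prop := ∀ e ∈ s, 0 < e.1 ∧ 0 < e.2

lemma shiftV_lt_shiftV_iff {x a b : ℕ} : shiftV x a < shiftV x b ↔ a < b := by
  unfold shiftV; split_ifs <;> omega

lemma shiftV_injective (x : ℕ) : Function.Injective (shiftV x) :=
  StrictMono.injective fun _ _ => shiftV_lt_shiftV_iff.mpr

lemma lt_shiftV (x v : ℕ) : v < shiftV x v := by
  unfold shiftV; split_ifs <;> omega

lemma addFirst_eq (x : ℕ) (s : Finset (ℕ × ℕ)) :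
    addFirst x s = insert (1, x) (s.image (Prod.map (shiftV x) (shiftV x))) := rfl

lemma one_mk_notMem_image_shiftV {s : Finset (ℕ × ℕ)} (hs : PositiveEdges s) (x : ℕ) :
    (1, x) ∉ s.image (Prod.map (shiftV x) (shiftV x)) := by
  simp only [mem_image, Prod.map, Prod.mk.injEq, not_exists, not_and]
  intro e he h1
  have := lt_shiftV x e.1
  have := (hs e he).1
  omega

lemma positiveEdges_addFirst (s : Finset (ℕ × ℕ)) {x : ℕ} (hx : 0 < x) :
    PositiveEdges (addFirst x s) := by
  rw [PositiveEdges, addFirst_eq, forall_mem_insert, forall_mem_image]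
  exact ⟨⟨one_pos, hx⟩, fun e _ => ⟨(lt_shiftV x e.1).pos, (lt_shiftV x e.2).pos⟩⟩

lemma card_addFirst {s : Finset (ℕ × ℕ)} (hs : PositiveEdges s) (x : ℕ) :
    (addFirst x s).card = s.card + 1 := by
  rw [addFirst_eq, card_insert_of_notMem (one_mk_notMem_image_shiftV hs x),
    card_image_of_injective]
  exact (shiftV_injective x).prodMap (shiftV_injective x)

lemma card_filter_addFirst {s : Finset (ℕ × ℕ)} (hs : PositiveEdges s) (x : ℕ)
    (Q : ℕ × ℕ → Prop) [DecidablePred Q] :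
    ((addFirst x s).filter Q).card
      = (s.filter fun e => Q (Prod.map (shiftV x) (shiftV x) e)).card
        + if Q (1, x) then 1 else 0 := by
  have hinj := (shiftV_injective x).prodMap (shiftV_injective x)
  rw [addFirst_eq, filter_insert, filter_image]
  split_ifs
  · rw [card_insert_of_notMem fun h =>
      one_mk_notMem_image_shiftV hs x (image_subset_image (filter_subset _ s) h),
      card_image_of_injective _ hinj]
  · rw [card_image_of_injective _ hinj, add_zero]

lemma card_filter_pairs_addFirst {s : Finset (ℕ × ℕ)} (hs : PositiveEdges s) (x : ℕ)
    (P : ℕ × ℕ → ℕ × ℕ → Prop) [∀ e f, Decidable (P e f)] (hP : ∀ e f, P e f → e.1 < f.1)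
    (hshift : ∀ e f,
      P (Prod.map (shiftV x) (shiftV x) e) (Prod.map (shiftV x) (shiftV x) f) ↔ P e f) :
    ((addFirst x s ×ˢ addFirst x s).filter fun p => P p.1 p.2).card
      = ((s ×ˢ s).filter fun p => P p.1 p.2).card
        + (s.filter fun e => P (1, x) (Prod.map (shiftV x) (shiftV x) e)).card := by
  have hinj : Set.InjOn (Prod.map (shiftV x) (shiftV x)) s :=
    ((shiftV_injective x).prodMap (shiftV_injective x)).injOn
  have hnew : ¬ P (1, x) (1, x) := fun h => (hP _ _ h).false
  have hold (e : ℕ × ℕ) : ¬ P (Prod.map (shiftV x) (shiftV x) e) (1, x) := fun h => by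
    have : shiftV x e.1 < 1 := hP _ _ h
    have := lt_shiftV x e.1
    omega
  simp only [card_filter, sum_product, addFirst_eq, sum_insert (one_mk_notMem_image_shiftV hs x),
    sum_image hinj, if_neg hnew, if_neg (hold _), hshift, zero_add]
  exact add_comm _ _

-- The edges of `s` crossed by, resp. nested under, the new first edge `{1, y}` of `addFirst y s`.
def crossCount (y : ℕ) (s : Finset (ℕ × ℕ)) : ℕ :=
  (s.filter fun e => e.1 + 1 < y ∧ y ≤ e.2 + 1).card

def nestCount (y : ℕ) (s : Finset (ℕ × ℕ)) : ℕ := (s.filter fun e => e.2 + 1 < y).card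

lemma crStat_addFirst {s : Finset (ℕ × ℕ)} (hs : PositiveEdges s) (x : ℕ) :
    crStat (addFirst x s) = crStat s + crossCount x s := by
  rw [crStat, card_filter_pairs_addFirst hs x (fun e f => e.1 < f.1 ∧ f.1 < e.2 ∧ e.2 < f.2)
    (fun _ _ h => h.1) (fun _ _ => by simp only [Prod.map, shiftV_lt_shiftV_iff]), crStat,
    crossCount]
  congr 2
  refine filter_congr fun e he => ?_
  have := hs e he
  simp only [Prod.map, shiftV]
  split_ifs <;> omega

lemma neStat_addFirst {s : Finset (ℕ × ℕ)} (hs : PositiveEdges s) (x : ℕ) :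
    neStat (addFirst x s) = neStat s + nestCount x s := by
  rw [neStat, card_filter_pairs_addFirst hs x (fun e f => e.1 < f.1 ∧ f.2 < e.2)
    (fun _ _ h => h.1) (fun _ _ => by simp only [Prod.map, shiftV_lt_shiftV_iff]), neStat,
    nestCount]
  congr 2
  refine filter_congr fun e he => ?_
  have := hs e he
  simp only [Prod.map, shiftV]
  split_ifs <;> omega

variable {A : Type*} [AddCommGroup A]

def crNeStat (α β : A) (s : Finset (ℕ × ℕ)) : A := crStat s • α + neStat s • β

lemma crNeStat_addFirst (α β : A) {s : Finset (ℕ × ℕ)} (hs : PositiveEdges s) (y : ℕ) :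
    crNeStat α β (addFirst y s) = crNeStat α β s + (crossCount y s • α + nestCount y s • β) := by
  rw [crNeStat, crNeStat, crStat_addFirst hs, neStat_addFirst hs, add_nsmul, add_nsmul]
  abel

lemma crNeStat_addFirst_two (α β : A) {s : Finset (ℕ × ℕ)} (hs : PositiveEdges s) :
    crNeStat α β (addFirst 2 s) = crNeStat α β s := by
  have hcross : crossCount 2 s = 0 :=
    card_eq_zero.mpr (filter_eq_empty_iff.mpr fun e he => by have := hs e he; omega)
  have hnest : nestCount 2 s = 0 :=
    card_eq_zero.mpr (filter_eq_empty_iff.mpr fun e he => by have := hs e he; omega)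
  rw [crNeStat_addFirst α β hs, hcross, hnest, zero_nsmul, zero_nsmul, add_zero, add_zero]

lemma crNeStat_addFirst_addFirst_of_lt (α β : A) {s : Finset (ℕ × ℕ)} (hs : PositiveEdges s)
    {x p : ℕ} (hp : 0 < p) (hpx : p < x) :
    crNeStat α β (addFirst (p + 2) (addFirst x s))
      = crNeStat α β (addFirst (p + 1) s) + (crNeStat α β (addFirst x s) - crNeStat α β s + α) := by
  have hcross : crossCount (p + 2) (addFirst x s) = crossCount (p + 1) s + 1 := by
    rw [crossCount, card_filter_addFirst hs, if_pos (by omega), crossCount]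
    congr 2
    refine filter_congr fun e _ => ?_
    simp only [Prod.map, shiftV]
    split_ifs <;> omega
  have hnest : nestCount (p + 2) (addFirst x s) = nestCount (p + 1) s := by
    rw [nestCount, card_filter_addFirst hs, if_neg (by omega), nestCount, add_zero]
    congr 1
    refine filter_congr fun e _ => ?_
    simp only [Prod.map, shiftV]
    split_ifs <;> omega
  rw [crNeStat_addFirst α β (positiveEdges_addFirst s (by omega)), crNeStat_addFirst α β hs,
    crNeStat_addFirst α β hs, hcross, hnest, add_nsmul, one_nsmul]
  abel

lemma crNeStat_addFirst_addFirst_of_le (α β : A) {s : Finset (ℕ × ℕ)} (hs : PositiveEdges s)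
    {x p : ℕ} (hx : 2 ≤ x) (hxp : x ≤ p) :
    crNeStat α β (addFirst (p + 2) (addFirst x s))
      = crNeStat α β (addFirst p s) + (crNeStat α β (addFirst x s) - crNeStat α β s + β) := by
  have hcross : crossCount (p + 2) (addFirst x s) = crossCount p s := by
    rw [crossCount, card_filter_addFirst hs, if_neg (by omega), crossCount, add_zero]
    congr 1
    refine filter_congr fun e _ => ?_
    simp only [Prod.map, shiftV]
    split_ifs <;> omega
  have hnest : nestCount (p + 2) (addFirst x s) = nestCount p s + 1 := by
    rw [nestCount, card_filter_addFirst hs, if_pos (by omega), nestCount]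
    congr 2
    refine filter_congr fun e _ => ?_
    simp only [Prod.map, shiftV]
    split_ifs <;> omega
  rw [crNeStat_addFirst α β (positiveEdges_addFirst s (by omega)), crNeStat_addFirst α β hs,
    crNeStat_addFirst α β hs, hcross, hnest, add_nsmul, one_nsmul]
  abel

end AddFirst

section Levels

open Finset

variable {A R : Type*} [AddCommGroup A] [CommSemiring R]

lemma Rmap_map_range (α β : A) (f : ℕ → A) {L i : ℕ} (hi : 0 < i) (hiL : i ≤ L) :
    Rmap α β i ((List.range L).map f) = (List.range (L + 2)).map fun p =>
      if p = 0 then f (i - 1) else if p ≤ i then f (p - 1) + (f (i - 1) - f 0 + α)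
      else f (p - 2) + (f (i - 1) - f 0 + β) := by
  have hget (n : ℕ) (hn : n < L) : ((List.range L).map f).getD n 0 = f n := by
    simp [hn]
  refine List.ext_getElem (by simp [Rmap]; omega) fun p h1 h2 => ?_
  simp only [Rmap, hget _ (show i - 1 < L by omega), hget _ (show 0 < L by omega)]
  rcases p with _ | p
  · simp
  · simp only [List.getElem_cons_succ, List.getElem_append, List.getElem_map, List.getElem_take,
      List.getElem_drop, List.getElem_range, List.length_map, List.length_take, List.length_range,
      min_eq_left hiL, Nat.add_one_ne_zero, if_false]
    split_ifs <;> first | omega | (congr 2 <;> omega)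

lemma IsSeq.eq_map_range {α β : A} {s : Finset (ℕ × ℕ)} {u : List A} (h : IsSeq α β s u) :
    PositiveEdges s ∧
      u = (List.range (2 * s.card + 1)).map fun p => crNeStat α β (addFirst (p + 2) s) := by
  induction h with
  | empty =>
    refine ⟨by simp [PositiveEdges], ?_⟩
    change [0] = [crNeStat α β (addFirst 2 ∅)]
    rw [crNeStat_addFirst_two α β (by simp [PositiveEdges])]
    simp [crNeStat, crStat, neStat]
  | step s u x _ h2 hx ih =>
    obtain ⟨hs, rfl⟩ := ih
    refine ⟨positiveEdges_addFirst s (by omega), ?_⟩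
    rw [Rmap_map_range α β _ (by omega) (by omega), card_addFirst hs,
      show 2 * (s.card + 1) + 1 = 2 * s.card + 1 + 2 by ring]
    refine List.map_congr_left fun p _ => ?_
    simp only [zero_add, crNeStat_addFirst_two α β hs]
    split_ifs with hp0 hpx
    · rw [hp0, crNeStat_addFirst_two α β (positiveEdges_addFirst s (by omega))]
      congr 2
      omega
    · rw [crNeStat_addFirst_addFirst_of_lt α β hs (by omega) (by omega : p < x),
        show p - 1 + 2 = p + 1 by omega, show x - 1 - 1 + 2 = x by omega]
    · rw [crNeStat_addFirst_addFirst_of_le α β hs h2 (by omega : x ≤ p),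
        show p - 2 + 2 = p by omega, show x - 1 - 1 + 2 = x by omega]

lemma IsSeq.getD_zero {α β : A} {s : Finset (ℕ × ℕ)} {u : List A} (h : IsSeq α β s u) :
    u.getD 0 0 = crNeStat α β s := by
  obtain ⟨hs, rfl⟩ := h.eq_map_range
  simp [crNeStat_addFirst_two α β hs]

lemma IsSeq.length_eq {α β : A} {s : Finset (ℕ × ℕ)} {u : List A} (h : IsSeq α β s u) :
    u.length = 2 * s.card + 1 := by
  rw [h.eq_map_range.2, List.length_map, List.length_range]

lemma levelM_succ_eq_bind (s : Finset (ℕ × ℕ)) (l : ℕ) :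
    levelM s (l + 1) = (childrenM s).bind fun K => levelM K l := by
  induction l with
  | zero =>
    rw [levelM, levelM, Multiset.singleton_bind]
    exact ((Multiset.bind_singleton _ id).trans (Multiset.map_id _)).symm
  | succ l ih => rw [levelM, ih, Multiset.bind_assoc]; rfl

lemma IsSeq.sum_map_levelM (ψ : AddChar A R) {α β : A} {s : Finset (ℕ × ℕ)} {u : List A}
    (h : IsSeq α β s u) (l : ℕ) :
    (((levelM s l).map (crNeStat α β)).map ψ).sum = levelSum ψ α β l u := by
  induction l generalizing s u with
  | zero =>
    simp only [levelM, levelSum, Multiset.map_singleton, Multiset.sum_singleton, h.getD_zero]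
  | succ l ih =>
    rw [levelM_succ_eq_bind, Multiset.map_bind, Multiset.map_bind, Multiset.sum_bind, childrenM,
      Multiset.map_map, ← sum_eq_multiset_sum]
    have hchild (x : ℕ) (hx : x ∈ Icc 2 (2 * s.card + 2)) :
        (((levelM (addFirst x s) l).map (crNeStat α β)).map ψ).sum
          = levelSum ψ α β l (Rmap α β (x - 1) u) :=
      ih (h.step s u x (mem_Icc.mp hx).1 (mem_Icc.mp hx).2)
    simp only [Function.comp_apply, sum_congr rfl hchild, levelSum, h.length_eq]
    rw [← Ico_add_one_right_eq_Icc, sum_Ico_eq_sum_range]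
    exact sum_congr (by congr 1) fun q _ => by rw [show 2 + q - 1 = q + 1 by omega]

end Levels

noncomputable section UniversalCharacter

def univChar (A : Type*) [AddCommGroup A] : AddChar A (AddMonoidAlgebra ℕ A) where
  toFun a := AddMonoidAlgebra.single a 1
  map_zero_eq_one' := rfl
  map_add_eq_mul' a b := by simp

variable {A : Type*} [AddCommGroup A]

lemma univChar_sum_injective :
    Function.Injective fun m : Multiset A => (m.map (univChar A)).sum := by
  classical
  intro m m' h
  have hcoeff (m : Multiset A) : ((m.map (univChar A)).sum).coeff = Multiset.toFinsupp m := by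
    induction m using Multiset.induction_on with
    | empty => simp
    | cons a m ih =>
      rw [Multiset.map_cons, Multiset.sum_cons, AddMonoidAlgebra.coeff_add, ih,
        ← Multiset.singleton_add, Multiset.toFinsupp_add, Multiset.toFinsupp_singleton]
      rfl
  exact Multiset.toFinsupp.injective ((hcoeff m).symm.trans ((congrArg _ h).trans (hcoeff m')))

lemma map_levelM_eq_map_levelM_iff {α β γ δ : A} (hpair : ({α, β} : Multiset A) = {γ, δ})
    {s t : Finset (ℕ × ℕ)} {u v : List A} (hs : IsSeq α β s u) (ht : IsSeq γ δ t v) :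
    (∀ l, (levelM s l).map (crNeStat α β) = (levelM t l).map (crNeStat γ δ)) ↔
      crNeStat α β s = crNeStat γ δ t ∧ (u : Multiset A) = v := by
  have hlevel (l : ℕ) : (levelM s l).map (crNeStat α β) = (levelM t l).map (crNeStat γ δ) ↔
      levelSum (univChar A) α β l u = levelSum (univChar A) γ δ l v := by
    rw [← hs.sum_map_levelM, ← ht.sum_map_levelM]
    exact univChar_sum_injective.eq_iff.symm
  constructor
  · intro h
    have h0 := h 0
    simp only [levelM, Multiset.map_singleton, Multiset.singleton_inj] at h0
    have h1 := (hlevel 1).mp (h 1)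
    rw [levelSum_one, levelSum_one] at h1
    exact ⟨h0, univChar_sum_injective h1⟩
  · rintro ⟨hstat, hperm⟩ l
    rw [hlevel]
    exact levelSum_congr _ hpair (by rw [hs.getD_zero, ht.getD_zero, hstat]) hperm l

end UniversalCharacter

theorem levels_coincide_iff_seq_eq_general {A : Type*} [AddCommGroup A] (α β : A)
    (M N : Finset (ℕ × ℕ))
    (u v w : List A) (hu : IsSeq α β M u) (hv : IsSeq α β N v) (hw : IsSeq β α N w) :
    ((∀ l : ℕ, (levelM M l).map (fun K => crStat K • α + neStat K • β)
        = (levelM N l).map (fun K => crStat K • α + neStat K • β)) ↔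
      (crStat M • α + neStat M • β = crStat N • α + neStat N • β ∧
        (↑u : Multiset A) = (↑v : Multiset A))) ∧
    ((∀ l : ℕ, (levelM M l).map (fun K => crStat K • α + neStat K • β)
        = (levelM N l).map (fun K => crStat K • β + neStat K • α)) ↔
      (crStat M • α + neStat M • β = crStat N • β + neStat N • α ∧
        (↑u : Multiset A) = (↑w : Multiset A))) :=
  ⟨map_levelM_eq_map_levelM_iff rfl hu hv,
    map_levelM_eq_map_levelM_iff (Multiset.pair_comm α β) hu hw⟩

/-- (1) `s_{α,β}` coincides on `T(M,l)` and `T(N,l)` for all `l ≥ 0` iff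
`s_{α,β}(M) = s_{α,β}(N)` and `seq_{α,β}(M)`, `seq_{α,β}(N)` are equal as multisets of terms;
(2) the multiset of values of `s_{α,β}` on `T(M,l)` equals that of `s_{β,α}` on `T(N,l)` for
all `l ≥ 0` iff `s_{α,β}(M) = s_{β,α}(N)` and `seq_{α,β}(M)`, `seq_{β,α}(N)` are equal as
multisets of terms. -/
theorem levels_coincide_iff_seq_eq {A : Type*} [AddCommGroup A] (α β : A) (n : ℕ)
    (M N : Finset (ℕ × ℕ)) (hM : IsMatching n M) (hN : IsMatching n N)
    (u v w : List A) (hu : IsSeq α β M u) (hv : IsSeq α β N v) (hw : IsSeq β α N w) :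
    ((∀ l : ℕ, (levelM M l).map (fun K => crStat K • α + neStat K • β)
        = (levelM N l).map (fun K => crStat K • α + neStat K • β)) ↔
      (crStat M • α + neStat M • β = crStat N • α + neStat N • β ∧
        (↑u : Multiset A) = (↑v : Multiset A))) ∧
    ((∀ l : ℕ, (levelM M l).map (fun K => crStat K • α + neStat K • β)
        = (levelM N l).map (fun K => crStat K • β + neStat K • α)) ↔
      (crStat M • α + neStat M • β = crStat N • β + neStat N • α ∧
        (↑u : Multiset A) = (↑w : Multiset A))) :=
  levels_coincide_iff_seq_eq_general α β M N u v w hu hv hw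
end

section
/- Let M be a matching on [2n]. If ne(M) > 0, then there exists a matching N on [2n] with the same set of edge-minima and the same set of edge-maxima as M (i.e., {min e : e ∈ N} = {min e : e ∈ M} and {max e : e ∈ N} = {max e : e ∈ M}) such that ne(N) = ne(M) − 1 and cr(N) = cr(M) + 1. Symmetrically, if cr(M) > 0, then there exists a matching N on [2n] with the same sets of edge-minima and edge-maxima as M such that cr(N) = cr(M) − 1 and ne(N) = ne(M) + 1. -/
/-! ### Auxiliary definitions and lemmas for the proof -/

/-- Crossing indicator for an ordered pair of edges. -/
def fC : ℕ×ℕ → ℕ×ℕ → ℕ := fun x y => if x.1 < y.1 ∧ y.1 < x.2 ∧ x.2 < y.2 then 1 else 0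

/-- Nesting indicator for an ordered pair of edges. -/
def fN : ℕ×ℕ → ℕ×ℕ → ℕ := fun x y => if x.1 < y.1 ∧ y.2 < x.2 then 1 else 0

lemma crStat_eq (s : Finset (ℕ×ℕ)) : crStat s = ∑ x ∈ s, ∑ y ∈ s, fC x y := by
  rw [crStat, Finset.card_filter, Finset.sum_product]; rfl

lemma neStat_eq (s : Finset (ℕ×ℕ)) : neStat s = ∑ x ∈ s, ∑ y ∈ s, fN x y := by
  rw [neStat, Finset.card_filter, Finset.sum_product]; rfl

lemma sum2_insert (f : ℕ×ℕ → ℕ×ℕ → ℕ) (e : ℕ×ℕ) (s : Finset (ℕ×ℕ)) (he : e ∉ s) :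
    ∑ x ∈ insert e s, ∑ y ∈ insert e s, f x y
      = f e e + ∑ y ∈ s, f e y + ∑ x ∈ s, f x e + ∑ x ∈ s, ∑ y ∈ s, f x y := by
  rw [Finset.sum_insert he, Finset.sum_insert he]
  rw [Finset.sum_congr rfl (fun x _ => Finset.sum_insert he (f := f x))]
  rw [Finset.sum_add_distrib]
  ring

lemma sum2_insert2 (f : ℕ×ℕ → ℕ×ℕ → ℕ) (u v : ℕ×ℕ) (t : Finset (ℕ×ℕ))
    (hu : u ∉ insert v t) (hv : v ∉ t) :
    ∑ x ∈ insert u (insert v t), ∑ y ∈ insert u (insert v t), f x y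
      = (f u u + f u v + f v u + f v v)
        + ∑ g ∈ t, (f u g + f g u + f v g + f g v)
        + ∑ x ∈ t, ∑ y ∈ t, f x y := by
  rw [sum2_insert f u _ hu, sum2_insert f v t hv, Finset.sum_insert hv, Finset.sum_insert hv]
  simp only [Finset.sum_add_distrib]
  ring

lemma keyC (a b c d p q : ℕ) (hab : a < b) (hbc : b < c) (hcd : c < d)
    (hpq : p < q) (h1 : p ≠ a) (h2 : p ≠ b) (h3 : p ≠ c) (h4 : p ≠ d)
    (h5 : q ≠ a) (h6 : q ≠ b) (h7 : q ≠ c) (h8 : q ≠ d)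
    (hbad : ¬(a < p ∧ p < b ∧ c < q ∧ q < d)) :
    fC (a,c) (p,q) + fC (p,q) (a,c) + fC (b,d) (p,q) + fC (p,q) (b,d)
      = fC (a,d) (p,q) + fC (p,q) (a,d) + fC (b,c) (p,q) + fC (p,q) (b,c) := by
  simp only [fC]
  split_ifs <;> omega

lemma keyN (a b c d p q : ℕ) (hab : a < b) (hbc : b < c) (hcd : c < d)
    (hpq : p < q) (h1 : p ≠ a) (h2 : p ≠ b) (h3 : p ≠ c) (h4 : p ≠ d)
    (h5 : q ≠ a) (h6 : q ≠ b) (h7 : q ≠ c) (h8 : q ≠ d)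
    (hbad : ¬(a < p ∧ p < b ∧ c < q ∧ q < d)) :
    fN (a,c) (p,q) + fN (p,q) (a,c) + fN (b,d) (p,q) + fN (p,q) (b,d)
      = fN (a,d) (p,q) + fN (p,q) (a,d) + fN (b,c) (p,q) + fN (p,q) (b,c) := by
  simp only [fN]
  split_ifs <;> omega

/-- The main counting lemma: swapping the closers of a nesting pair `(a,d)`, `(b,c)`
(yielding the crossing pair `(a,c)`, `(b,d)`) decreases `ne` by one and increases `cr` by one,
provided no other edge has its opener in `(a,b)` and its closer in `(c,d)`. -/
lemma count_swap (a b c d : ℕ) (hab : a < b) (hbc : b < c) (hcd : c < d)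
    (t : Finset (ℕ×ℕ))
    (hg : ∀ g ∈ t, g.1 < g.2 ∧ (g.1 ≠ a ∧ g.1 ≠ b ∧ g.1 ≠ c ∧ g.1 ≠ d)
        ∧ (g.2 ≠ a ∧ g.2 ≠ b ∧ g.2 ≠ c ∧ g.2 ≠ d)
        ∧ ¬(a < g.1 ∧ g.1 < b ∧ c < g.2 ∧ g.2 < d)) :
    neStat (insert (a,c) (insert (b,d) t)) + 1 = neStat (insert (a,d) (insert (b,c) t)) ∧
    crStat (insert (a,c) (insert (b,d) t)) = crStat (insert (a,d) (insert (b,c) t)) + 1 := by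
  have hnot : ∀ x y : ℕ, (x = a ∨ x = b ∨ x = c ∨ x = d) → (x,y) ∉ t := by
    intro x y hx hmem
    have h := (hg (x,y) hmem).2.1
    simp only at h
    rcases hx with rfl|rfl|rfl|rfl <;> tauto
  have h1 : (b,d) ∉ t := hnot b d (by tauto)
  have h2 : (b,c) ∉ t := hnot b c (by tauto)
  have h3 : (a,c) ∉ insert (b,d) t := by
    simp only [Finset.mem_insert]
    rintro (h | h)
    · exact absurd (congrArg Prod.fst h) (by simp; omega)
    · exact hnot a c (by tauto) h
  have h4 : (a,d) ∉ insert (b,c) t := by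
    simp only [Finset.mem_insert]
    rintro (h | h)
    · exact absurd (congrArg Prod.fst h) (by simp; omega)
    · exact hnot a d (by tauto) h
  have hsC : ∑ g ∈ t, (fC (a,c) g + fC g (a,c) + fC (b,d) g + fC g (b,d))
      = ∑ g ∈ t, (fC (a,d) g + fC g (a,d) + fC (b,c) g + fC g (b,c)) := by
    refine Finset.sum_congr rfl fun g hgm => ?_
    obtain ⟨hpq, ⟨k1,k2,k3,k4⟩, ⟨k5,k6,k7,k8⟩, hbad⟩ := hg g hgm
    have := keyC a b c d g.1 g.2 hab hbc hcd hpq k1 k2 k3 k4 k5 k6 k7 k8 hbad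
    simpa using this
  have hsN : ∑ g ∈ t, (fN (a,c) g + fN g (a,c) + fN (b,d) g + fN g (b,d))
      = ∑ g ∈ t, (fN (a,d) g + fN g (a,d) + fN (b,c) g + fN g (b,c)) := by
    refine Finset.sum_congr rfl fun g hgm => ?_
    obtain ⟨hpq, ⟨k1,k2,k3,k4⟩, ⟨k5,k6,k7,k8⟩, hbad⟩ := hg g hgm
    have := keyN a b c d g.1 g.2 hab hbc hcd hpq k1 k2 k3 k4 k5 k6 k7 k8 hbad
    simpa using this
  constructor
  · rw [neStat_eq, neStat_eq, sum2_insert2 fN (a,c) (b,d) t h3 h1,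
      sum2_insert2 fN (a,d) (b,c) t h4 h2, hsN]
    have e1 : fN (a,c) (a,c) = 0 := by simp [fN]
    have e2 : fN (a,c) (b,d) = 0 := by simp [fN]; omega
    have e3 : fN (b,d) (a,c) = 0 := by simp [fN]; omega
    have e4 : fN (b,d) (b,d) = 0 := by simp [fN]
    have e5 : fN (a,d) (a,d) = 0 := by simp [fN]
    have e6 : fN (a,d) (b,c) = 1 := by simp [fN]; omega
    have e7 : fN (b,c) (a,d) = 0 := by simp [fN]; omega
    have e8 : fN (b,c) (b,c) = 0 := by simp [fN]
    omega
  · rw [crStat_eq, crStat_eq, sum2_insert2 fC (a,c) (b,d) t h3 h1,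
      sum2_insert2 fC (a,d) (b,c) t h4 h2, hsC]
    have e1 : fC (a,c) (a,c) = 0 := by simp [fC]
    have e2 : fC (a,c) (b,d) = 1 := by simp [fC]; omega
    have e3 : fC (b,d) (a,c) = 0 := by simp [fC]; omega
    have e4 : fC (b,d) (b,d) = 0 := by simp [fC]
    have e5 : fC (a,d) (a,d) = 0 := by simp [fC]
    have e6 : fC (a,d) (b,c) = 0 := by simp [fC]; omega
    have e7 : fC (b,c) (a,d) = 0 := by simp [fC]; omega
    have e8 : fC (b,c) (b,c) = 0 := by simp [fC]
    omega

/-- Distinct edges of a matching are vertex-disjoint. -/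
lemma matching_disjoint {n : ℕ} {M : Finset (ℕ×ℕ)} (hM : IsMatching n M) :
    ∀ e ∈ M, ∀ f ∈ M, e ≠ f → e.1 ≠ f.1 ∧ e.1 ≠ f.2 ∧ e.2 ≠ f.1 ∧ e.2 ≠ f.2 := by
  obtain ⟨hcard, hbound, huniq⟩ := hM
  intro e he f hf hef
  have hbe := hbound e he
  have hbf := hbound f hf
  refine ⟨?_, ?_, ?_, ?_⟩ <;> intro h
  · obtain ⟨g, _, hgu⟩ := huniq e.1 hbe.2.1 (by omega)
    exact hef ((hgu e ⟨he, Or.inl rfl⟩).trans (hgu f ⟨hf, Or.inl h⟩).symm)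
  · obtain ⟨g, _, hgu⟩ := huniq e.1 hbe.2.1 (by omega)
    exact hef ((hgu e ⟨he, Or.inl rfl⟩).trans (hgu f ⟨hf, Or.inr h⟩).symm)
  · obtain ⟨g, _, hgu⟩ := huniq e.2 (by omega) (by omega)
    exact hef ((hgu e ⟨he, Or.inr rfl⟩).trans (hgu f ⟨hf, Or.inl h⟩).symm)
  · obtain ⟨g, _, hgu⟩ := huniq e.2 (by omega) (by omega)
    exact hef ((hgu e ⟨he, Or.inr rfl⟩).trans (hgu f ⟨hf, Or.inr h⟩).symm)

/-- Swapping the closers of two edges of a matching yields a matching with the same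
sets of openers and closers. -/
lemma swap_structure {n : ℕ} {M : Finset (ℕ×ℕ)} (hM : IsMatching n M)
    {e1 e2 : ℕ×ℕ} (h1 : e1 ∈ M) (h2 : e2 ∈ M) (hne : e1 ≠ e2)
    (h12 : e1.1 < e2.2) (h21 : e2.1 < e1.2) :
    M = insert e1 (insert e2 ((M.erase e1).erase e2)) ∧
    IsMatching n (insert (e1.1, e2.2) (insert (e2.1, e1.2) ((M.erase e1).erase e2))) ∧
    (insert (e1.1, e2.2) (insert (e2.1, e1.2) ((M.erase e1).erase e2))).image Prod.fst
      = M.image Prod.fst ∧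
    (insert (e1.1, e2.2) (insert (e2.1, e1.2) ((M.erase e1).erase e2))).image Prod.snd
      = M.image Prod.snd := by
  set t := (M.erase e1).erase e2 with ht_def
  have hdisj := matching_disjoint hM
  have hd12 := hdisj e1 h1 e2 h2 hne
  have hbnd := hM.2.1
  have he1b := hbnd e1 h1
  have he2b := hbnd e2 h2
  have ht : ∀ g ∈ t, g ∈ M ∧ g ≠ e1 ∧ g ≠ e2 := by
    intro g hg
    rw [ht_def, Finset.mem_erase, Finset.mem_erase] at hg
    exact ⟨hg.2.2, hg.2.1, hg.1⟩
  have hMeq : M = insert e1 (insert e2 t) := by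
    rw [ht_def]
    rw [Finset.insert_erase (Finset.mem_erase.mpr ⟨fun h => hne h.symm, h2⟩),
      Finset.insert_erase h1]
  have hv2t : (e2.1, e1.2) ∉ t := by
    intro h
    obtain ⟨hvM, _, hv2⟩ := ht _ h
    exact (hdisj _ hvM e2 h2 hv2).1 rfl
  have hv1t : (e1.1, e2.2) ∉ insert (e2.1, e1.2) t := by
    simp only [Finset.mem_insert]
    rintro (h | h)
    · simp only [Prod.mk.injEq] at h
      exact hd12.1 h.1
    · obtain ⟨hvM, hv1, _⟩ := ht _ h
      exact (hdisj _ hvM e1 h1 hv1).1 rfl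
  set N := insert (e1.1, e2.2) (insert (e2.1, e1.2) t) with hN_def
  have hsub : ({e1, e2} : Finset (ℕ×ℕ)) ⊆ M := by
    intro x hx; rcases Finset.mem_insert.mp hx with rfl | hx
    · exact h1
    · rw [Finset.mem_singleton.mp hx]; exact h2
  have hn2 : 2 ≤ n := by
    have := Finset.card_le_card hsub
    rw [Finset.card_pair hne] at this
    omega
  have htcard : t.card = n - 2 := by
    rw [ht_def, Finset.card_erase_of_mem (Finset.mem_erase.mpr ⟨fun h => hne h.symm, h2⟩),
      Finset.card_erase_of_mem h1, hM.1]
    omega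
  have hNcard : N.card = n := by
    rw [hN_def, Finset.card_insert_of_notMem hv1t,
      Finset.card_insert_of_notMem hv2t, htcard]
    omega
  have hNbnd : ∀ e ∈ N, e.1 < e.2 ∧ 1 ≤ e.1 ∧ e.2 ≤ 2 * n := by
    intro e he
    rw [hN_def, Finset.mem_insert, Finset.mem_insert] at he
    rcases he with rfl | rfl | he
    · exact ⟨h12, he1b.2.1, he2b.2.2⟩
    · exact ⟨h21, he2b.2.1, he1b.2.2⟩
    · exact hbnd e (ht e he).1
  have hkey : ∀ g ∈ t, (e1.1 ≠ g.1 ∧ e1.1 ≠ g.2 ∧ e1.2 ≠ g.1 ∧ e1.2 ≠ g.2)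
      ∧ (e2.1 ≠ g.1 ∧ e2.1 ≠ g.2 ∧ e2.2 ≠ g.1 ∧ e2.2 ≠ g.2) := by
    intro g hg
    obtain ⟨hgM, hg1, hg2⟩ := ht g hg
    exact ⟨hdisj e1 h1 g hgM (fun h => hg1 h.symm),
           hdisj e2 h2 g hgM (fun h => hg2 h.symm)⟩
  have hNdisj : ∀ g ∈ N, ∀ g' ∈ N, g ≠ g' →
      g.1 ≠ g'.1 ∧ g.1 ≠ g'.2 ∧ g.2 ≠ g'.1 ∧ g.2 ≠ g'.2 := by
    intro g hg g' hg' hgg'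
    rw [hN_def, Finset.mem_insert, Finset.mem_insert] at hg hg'
    have hd12' := hd12
    have he1o := he1b.1
    have he2o := he2b.1
    rcases hg with rfl | rfl | hg <;> rcases hg' with rfl | rfl | hg'
    · exact absurd rfl hgg'
    · simp only; omega
    · have := hkey g' hg'; simp only at this ⊢; omega
    · simp only; omega
    · exact absurd rfl hgg'
    · have := hkey g' hg'; simp only at this ⊢; omega
    · have := hkey g hg; simp only at this ⊢; omega
    · have := hkey g hg; simp only at this ⊢; omega
    · obtain ⟨hgM, _, _⟩ := ht g hg
      obtain ⟨hgM', _, _⟩ := ht g' hg'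
      exact hdisj g hgM g' hgM' hgg'
  have hNuniq : ∀ v : ℕ, 1 ≤ v → v ≤ 2 * n → ∃! e, e ∈ N ∧ (v = e.1 ∨ v = e.2) := by
    intro v hv1 hv2
    obtain ⟨e, ⟨heM, hve⟩, hu⟩ := hM.2.2 v hv1 hv2
    have huniq' : ∀ w, (w ∈ N ∧ (v = w.1 ∨ v = w.2)) →
        ∀ g, (g ∈ N ∧ (v = g.1 ∨ v = g.2)) → g = w := by
      intro w hw g hgg
      by_contra h
      have hd := hNdisj g hgg.1 w hw.1 h
      rcases hw.2 with h1' | h1' <;> rcases hgg.2 with h2' | h2' <;> omega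
    have hmem1 : (e1.1, e2.2) ∈ N := Finset.mem_insert_self _ _
    have hmem2 : (e2.1, e1.2) ∈ N := Finset.mem_insert_of_mem (Finset.mem_insert_self _ _)
    have hmemt : ∀ g ∈ t, g ∈ N := fun g hg =>
      Finset.mem_insert_of_mem (Finset.mem_insert_of_mem hg)
    by_cases hee1 : e = e1
    · rw [hee1] at hve
      rcases hve with hv | hv
      · exact ⟨(e1.1, e2.2), ⟨hmem1, Or.inl hv⟩, huniq' _ ⟨hmem1, Or.inl hv⟩⟩
      · exact ⟨(e2.1, e1.2), ⟨hmem2, Or.inr hv⟩, huniq' _ ⟨hmem2, Or.inr hv⟩⟩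
    · by_cases hee2 : e = e2
      · rw [hee2] at hve
        rcases hve with hv | hv
        · exact ⟨(e2.1, e1.2), ⟨hmem2, Or.inl hv⟩, huniq' _ ⟨hmem2, Or.inl hv⟩⟩
        · exact ⟨(e1.1, e2.2), ⟨hmem1, Or.inr hv⟩, huniq' _ ⟨hmem1, Or.inr hv⟩⟩
      · have het : e ∈ t := by
          rw [ht_def, Finset.mem_erase, Finset.mem_erase]
          exact ⟨hee2, hee1, heM⟩
        exact ⟨e, ⟨hmemt e het, hve⟩, huniq' _ ⟨hmemt e het, hve⟩⟩
  refine ⟨hMeq, ⟨hNcard, hNbnd, hNuniq⟩, ?_, ?_⟩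
  · rw [hN_def]
    conv_rhs => rw [hMeq]
    simp [Finset.image_insert]
  · rw [hN_def]
    conv_rhs => rw [hMeq]
    simp only [Finset.image_insert]
    exact Finset.insert_comm _ _ _

/-- the n-c and c-n transformations: if `ne(M) > 0` there is a matching `N` on
`[2n]` with the same sets of edge-minima and edge-maxima as `M` such that `ne(N) = ne(M) - 1`
and `cr(N) = cr(M) + 1`; symmetrically, if `cr(M) > 0` there is such an `N` with
`cr(N) = cr(M) - 1` and `ne(N) = ne(M) + 1`. -/
theorem exists_transformed_matching (n : ℕ) (M : Finset (ℕ × ℕ)) (hM : IsMatching n M) :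
    (0 < neStat M → ∃ N : Finset (ℕ × ℕ), IsMatching n N ∧
        N.image Prod.fst = M.image Prod.fst ∧ N.image Prod.snd = M.image Prod.snd ∧
        neStat N = neStat M - 1 ∧ crStat N = crStat M + 1) ∧
    (0 < crStat M → ∃ N : Finset (ℕ × ℕ), IsMatching n N ∧
        N.image Prod.fst = M.image Prod.fst ∧ N.image Prod.snd = M.image Prod.snd ∧
        crStat N = crStat M - 1 ∧ neStat N = neStat M + 1) := by
  constructor
  · -- nesting to crossing
    intro h0
    have hFne : ((M ×ˢ M).filter fun p => p.1.1 < p.2.1 ∧ p.2.2 < p.1.2).Nonempty := by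
      unfold neStat at h0
      exact Finset.card_pos.mp h0
    obtain ⟨p, hpF, hmin⟩ := Finset.exists_min_image _ (fun p => p.1.2) hFne
    rw [Finset.mem_filter, Finset.mem_product] at hpF
    obtain ⟨⟨hp1, hp2⟩, hab, hcd⟩ := hpF
    have hbc : p.2.1 < p.2.2 := (hM.2.1 _ hp2).1
    have hne' : p.1 ≠ p.2 := fun h => absurd hab (by rw [h]; omega)
    obtain ⟨hMeq, hNmatch, hf, hs⟩ := swap_structure hM hp1 hp2 hne'
      (lt_trans hab hbc) (lt_trans hbc hcd)
    set t := (M.erase p.1).erase p.2 with htdef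
    have hg : ∀ g ∈ t, g.1 < g.2
        ∧ (g.1 ≠ p.1.1 ∧ g.1 ≠ p.2.1 ∧ g.1 ≠ p.2.2 ∧ g.1 ≠ p.1.2)
        ∧ (g.2 ≠ p.1.1 ∧ g.2 ≠ p.2.1 ∧ g.2 ≠ p.2.2 ∧ g.2 ≠ p.1.2)
        ∧ ¬(p.1.1 < g.1 ∧ g.1 < p.2.1 ∧ p.2.2 < g.2 ∧ g.2 < p.1.2) := by
      intro g hgt
      rw [htdef, Finset.mem_erase, Finset.mem_erase] at hgt
      obtain ⟨hg2, hg1, hgM⟩ := hgt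
      have d1 := matching_disjoint hM g hgM p.1 hp1 hg1
      have d2 := matching_disjoint hM g hgM p.2 hp2 hg2
      refine ⟨(hM.2.1 g hgM).1, ⟨d1.1, d2.1, d2.2.1, d1.2.1⟩,
        ⟨d1.2.2.1, d2.2.2.1, d2.2.2.2, d1.2.2.2⟩, ?_⟩
      rintro ⟨q1, q2, q3, q4⟩
      have hmem : (g, p.2) ∈ (M ×ˢ M).filter fun p => p.1.1 < p.2.1 ∧ p.2.2 < p.1.2 :=
        Finset.mem_filter.mpr ⟨Finset.mem_product.mpr ⟨hgM, hp2⟩, q2, q3⟩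
      have := hmin _ hmem
      have hred : (p.1.2 : ℕ) ≤ g.2 := this
      clear this
      omega
    obtain ⟨hc1, hc2⟩ := count_swap p.1.1 p.2.1 p.2.2 p.1.2 hab hbc hcd t hg
    simp only [Prod.mk.eta] at hc1 hc2
    rw [← hMeq] at hc1 hc2
    exact ⟨_, hNmatch, hf, hs, by omega, by omega⟩
  · -- crossing to nesting
    intro h0
    have hFne : ((M ×ˢ M).filter fun p =>
        p.1.1 < p.2.1 ∧ p.2.1 < p.1.2 ∧ p.1.2 < p.2.2).Nonempty := by
      unfold crStat at h0
      exact Finset.card_pos.mp h0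
    obtain ⟨p, hpF, hmin⟩ := Finset.exists_min_image _ (fun p => p.2.2) hFne
    rw [Finset.mem_filter, Finset.mem_product] at hpF
    obtain ⟨⟨hp1, hp2⟩, hab, hbc, hcd⟩ := hpF
    have hne' : p.1 ≠ p.2 := fun h => absurd hab (by rw [h]; omega)
    obtain ⟨hMeq, hNmatch, hf, hs⟩ := swap_structure hM hp1 hp2 hne'
      (by omega) hbc
    set t := (M.erase p.1).erase p.2 with htdef
    have hg : ∀ g ∈ t, g.1 < g.2
        ∧ (g.1 ≠ p.1.1 ∧ g.1 ≠ p.2.1 ∧ g.1 ≠ p.1.2 ∧ g.1 ≠ p.2.2)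
        ∧ (g.2 ≠ p.1.1 ∧ g.2 ≠ p.2.1 ∧ g.2 ≠ p.1.2 ∧ g.2 ≠ p.2.2)
        ∧ ¬(p.1.1 < g.1 ∧ g.1 < p.2.1 ∧ p.1.2 < g.2 ∧ g.2 < p.2.2) := by
      intro g hgt
      rw [htdef, Finset.mem_erase, Finset.mem_erase] at hgt
      obtain ⟨hg2, hg1, hgM⟩ := hgt
      have d1 := matching_disjoint hM g hgM p.1 hp1 hg1
      have d2 := matching_disjoint hM g hgM p.2 hp2 hg2
      refine ⟨(hM.2.1 g hgM).1, ⟨d1.1, d2.1, d1.2.1, d2.2.1⟩,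
        ⟨d1.2.2.1, d2.2.2.1, d1.2.2.2, d2.2.2.2⟩, ?_⟩
      rintro ⟨q1, q2, q3, q4⟩
      have hmem : (p.1, g) ∈ (M ×ˢ M).filter fun p =>
          p.1.1 < p.2.1 ∧ p.2.1 < p.1.2 ∧ p.1.2 < p.2.2 :=
        Finset.mem_filter.mpr ⟨Finset.mem_product.mpr ⟨hp1, hgM⟩, q1, show g.1 < p.1.2 by omega, q3⟩
      have := hmin _ hmem
      have hred : (p.2.2 : ℕ) ≤ g.2 := this
      clear this
      omega
    obtain ⟨hc1, hc2⟩ := count_swap p.1.1 p.2.1 p.1.2 p.2.2 hab hbc hcd t hg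
    simp only [Prod.mk.eta] at hc1 hc2
    rw [← hMeq] at hc1 hc2
    exact ⟨_, hNmatch, hf, hs, by omega, by omega⟩
end

section
/- Let M, N be two (not necessarily distinct) matchings on [2n] such that the statistic ca coincides (as multisets of values) on T(M,l) and T(N,l) for l = 0 and l = 1. Then ca coincides on T(M,l) and T(N,l) for every l ≥ 0. -/
namespace CaProof

lemma shiftV_le_iff {x a b : ℕ} : shiftV x a ≤ shiftV x b ↔ a ≤ b := by
  unfold shiftV; split_ifs <;> omega

lemma shiftV_lt_iff {x a b : ℕ} : shiftV x a < shiftV x b ↔ a < b := by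
  unfold shiftV; split_ifs <;> omega

lemma shiftV_inj {x : ℕ} : Function.Injective (shiftV x) := fun a b h => by
  have := @shiftV_le_iff x a b
  have := @shiftV_le_iff x b a
  omega

lemma two_le_shiftV {x v : ℕ} : 2 ≤ shiftV x v ∨ v = 0 := by
  unfold shiftV; split_ifs <;> omega

lemma shiftV_ne {x v : ℕ} : shiftV x v ≠ x := by
  unfold shiftV; split_ifs <;> omega

lemma lt_shiftV_iff {x m : ℕ} (hx : 2 ≤ x) : x < shiftV x m ↔ x - 1 ≤ m := by
  unfold shiftV; split_ifs <;> omega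

lemma le_shiftV_iff {x m : ℕ} (hx : 2 ≤ x) : x ≤ shiftV x m ↔ x - 1 ≤ m := by
  unfold shiftV; split_ifs <;> omega

lemma emap_inj {x : ℕ} : Function.Injective (fun e : ℕ × ℕ => (shiftV x e.1, shiftV x e.2)) := by
  intro a b h
  simp only [Prod.mk.injEq] at h
  exact Prod.ext (shiftV_inj h.1) (shiftV_inj h.2)

def PosFst (s : Finset (ℕ × ℕ)) : Prop := ∀ e ∈ s, 1 ≤ e.1

lemma notMem_image {x : ℕ} {s : Finset (ℕ × ℕ)} (hs : PosFst s) :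
    (1, x) ∉ s.image (fun e => (shiftV x e.1, shiftV x e.2)) := by
  simp only [Finset.mem_image, not_exists]
  intro e he
  obtain ⟨hes, h⟩ := he
  have h1 : shiftV x e.1 = 1 := congrArg Prod.fst h
  have h2 := hs e hes
  unfold shiftV at h1; split_ifs at h1 <;> omega

lemma posFst_addFirst (x : ℕ) {s : Finset (ℕ × ℕ)} (hs : PosFst s) :
    PosFst (addFirst x s) := by
  intro e he
  rw [addFirst, Finset.mem_insert] at he
  rcases he with rfl | he
  · exact le_refl 1
  · simp only [Finset.mem_image] at he
    obtain ⟨f, -, rfl⟩ := he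
    simp only
    unfold shiftV; split_ifs <;> omega

lemma card_addFirst (x : ℕ) {s : Finset (ℕ × ℕ)} (hs : PosFst s) :
    (addFirst x s).card = s.card + 1 := by
  rw [addFirst, Finset.card_insert_of_notMem (notMem_image hs),
    Finset.card_image_of_injective _ emap_inj]

/-- number of edges with first entry ≥ v -/
def cfun (s : Finset (ℕ × ℕ)) (v : ℕ) : ℕ := (s.filter fun e => v ≤ e.1).card

def Dms (s : Finset (ℕ × ℕ)) : Multiset ℕ :=
  (Finset.Icc 1 (2 * s.card + 1)).val.map (cfun s)

lemma caStat_eq_sum (s : Finset (ℕ × ℕ)) :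
    caStat s = ∑ e ∈ s, ∑ f ∈ s, if e.2 < f.1 then 1 else 0 := by
  rw [caStat, Finset.card_filter, Finset.sum_product]

lemma sum_image_shift {x : ℕ} (s : Finset (ℕ × ℕ)) (g : ℕ × ℕ → ℕ) :
    ∑ f ∈ s.image (fun e => (shiftV x e.1, shiftV x e.2)), g f
      = ∑ e ∈ s, g (shiftV x e.1, shiftV x e.2) :=
  Finset.sum_image (fun a _ b _ h => emap_inj h)

lemma caStat_addFirst {x : ℕ} (hx : 2 ≤ x) {s : Finset (ℕ × ℕ)} (hs : PosFst s) :
    caStat (addFirst x s) = caStat s + cfun s (x - 1) := by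
  rw [caStat_eq_sum, addFirst, Finset.sum_insert (notMem_image hs),
    Finset.sum_insert (notMem_image hs), sum_image_shift]
  have h3 : ¬ ((1, x).2 < ((1 : ℕ), x).1) := by simp; omega
  rw [if_neg h3, zero_add, sum_image_shift]
  have h1 : (∑ e ∈ s, if (1, x).2 < (shiftV x e.1, shiftV x e.2).1 then 1 else 0)
      = cfun s (x - 1) := by
    rw [cfun, Finset.card_filter]
    apply Finset.sum_congr rfl
    intro e _
    simp only [lt_shiftV_iff hx]
  have h2 : ∀ e ∈ s, (Finset.sum (insert (1, x)
      (s.image fun e => (shiftV x e.1, shiftV x e.2)))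
      fun f => if (shiftV x e.1, shiftV x e.2).2 < f.1 then 1 else 0)
      = ∑ f ∈ s, if e.2 < f.1 then 1 else 0 := by
    intro e _
    rw [Finset.sum_insert (notMem_image hs), sum_image_shift]
    have : ¬ (shiftV x e.2 < ((1 : ℕ), x).1) := by
      simp only; unfold shiftV; split_ifs <;> omega
    rw [if_neg this, zero_add]
    apply Finset.sum_congr rfl
    intro f _
    simp only [shiftV_lt_iff]
  rw [Finset.sum_congr rfl h2, h1, caStat_eq_sum]
  omega

lemma icc_decomp {x n : ℕ} (hx1 : 2 ≤ x) (hx2 : x ≤ 2 * n + 2) :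
    (Finset.Icc 1 (2 * n + 3)).val
      = 1 ::ₘ x ::ₘ (Finset.Icc 1 (2 * n + 1)).val.map (shiftV x) := by
  have himg : (Finset.Icc 1 (2 * n + 1)).val.map (shiftV x)
      = ((Finset.Icc 1 (2 * n + 1)).image (shiftV x)).val :=
    (Finset.image_val_of_injOn (fun a _ b _ h => shiftV_inj h)).symm
  have hx_not : x ∉ (Finset.Icc 1 (2 * n + 1)).image (shiftV x) := by
    simp only [Finset.mem_image, not_exists]
    intro v hv
    obtain ⟨-, h⟩ := hv
    exact shiftV_ne h
  have h1_not : (1 : ℕ) ∉ insert x ((Finset.Icc 1 (2 * n + 1)).image (shiftV x)) := by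
    simp only [Finset.mem_insert, Finset.mem_image, not_or, not_exists]
    refine ⟨by omega, ?_⟩
    intro v hv
    obtain ⟨hv1, h⟩ := hv
    rcases two_le_shiftV (x := x) (v := v) with h2 | h2
    · omega
    · rw [h2] at hv1; simp [Finset.mem_Icc] at hv1
  rw [himg, ← Finset.insert_val_of_notMem hx_not, ← Finset.insert_val_of_notMem h1_not]
  congr 1
  ext y
  simp only [Finset.mem_Icc, Finset.mem_insert, Finset.mem_image]
  constructor
  · rintro ⟨hy1, hy2⟩
    by_cases h1 : y = 1
    · exact Or.inl h1
    by_cases h2 : y = x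
    · exact Or.inr (Or.inl h2)
    refine Or.inr (Or.inr ?_)
    by_cases h3 : y < x
    · exact ⟨y - 1, by omega, by unfold shiftV; split_ifs <;> omega⟩
    · exact ⟨y - 2, by omega, by unfold shiftV; split_ifs <;> omega⟩
  · rintro (rfl | rfl | ⟨v, hv, rfl⟩)
    · omega
    · omega
    · unfold shiftV; split_ifs <;> omega

lemma cfun_addFirst_one (x : ℕ) {s : Finset (ℕ × ℕ)} (hs : PosFst s) :
    cfun (addFirst x s) 1 = s.card + 1 := by
  rw [cfun, ← card_addFirst x hs]
  congr 1
  apply Finset.filter_true_of_mem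
  intro e he
  rw [addFirst, Finset.mem_insert] at he
  rcases he with rfl | he
  · exact le_refl 1
  · simp only [Finset.mem_image] at he
    obtain ⟨f, -, rfl⟩ := he
    simp only
    unfold shiftV; split_ifs <;> omega

lemma filter_image_card (s : Finset (ℕ × ℕ)) (x : ℕ) (p : ℕ × ℕ → Prop) [DecidablePred p] :
    ((s.image fun e => (shiftV x e.1, shiftV x e.2)).filter p).card
      = (s.filter fun e => p (shiftV x e.1, shiftV x e.2)).card := by
  rw [Finset.filter_image]
  exact Finset.card_image_of_injective _ emap_inj

lemma cfun_addFirst_x {x : ℕ} (hx : 2 ≤ x) (s : Finset (ℕ × ℕ)) :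
    cfun (addFirst x s) x = cfun s (x - 1) := by
  rw [cfun, addFirst, Finset.filter_insert, if_neg (by simp only; omega), filter_image_card]
  rw [cfun]
  congr 1
  apply Finset.filter_congr
  intro e _
  simp only [le_shiftV_iff hx]

lemma cfun_addFirst_shift {x v : ℕ} (hv : 1 ≤ v) (s : Finset (ℕ × ℕ)) :
    cfun (addFirst x s) (shiftV x v) = cfun s v := by
  have h2 : 2 ≤ shiftV x v := by
    rcases two_le_shiftV (x := x) (v := v) with h | h
    · exact h
    · omega
  rw [cfun, addFirst, Finset.filter_insert, if_neg (by simp only; omega), filter_image_card]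
  rw [cfun]
  congr 1
  apply Finset.filter_congr
  intro e _
  simp only [shiftV_le_iff]

lemma Dms_addFirst {x : ℕ} {s : Finset (ℕ × ℕ)} (hs : PosFst s)
    (hx1 : 2 ≤ x) (hx2 : x ≤ 2 * s.card + 2) :
    Dms (addFirst x s) = (s.card + 1) ::ₘ cfun s (x - 1) ::ₘ Dms s := by
  rw [Dms, card_addFirst x hs]
  have : 2 * (s.card + 1) + 1 = 2 * s.card + 3 := by ring
  rw [this, icc_decomp hx1 hx2, Multiset.map_cons, Multiset.map_cons, Multiset.map_map]
  rw [cfun_addFirst_one x hs, cfun_addFirst_x hx1]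
  congr 1
  congr 1
  rw [Dms]
  apply Multiset.map_congr rfl
  intro v hv
  rw [Finset.mem_val, Finset.mem_Icc] at hv
  exact cfun_addFirst_shift hv.1 s

end CaProof

namespace CaProof2
open CaProof

/-- Abstract model of the ca-distribution tree: state `(a, D)` = (caStat, multiset of
cfun-values on `[1, 2n+1]`). -/
def lvlA : ℕ → ℕ → Multiset ℕ → Multiset ℕ
  | 0, a, _ => {a}
  | l + 1, a, D => D.bind fun k => lvlA l (a + k) ((Multiset.card D + 1) / 2 ::ₘ k ::ₘ D)

lemma Dms_card (s : Finset (ℕ × ℕ)) : Multiset.card (Dms s) = 2 * s.card + 1 := by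
  rw [Dms, Multiset.card_map]
  have : Multiset.card (Finset.Icc 1 (2 * s.card + 1)).val
      = (Finset.Icc 1 (2 * s.card + 1)).card := rfl
  rw [this, Nat.card_Icc]
  omega

lemma levelM_succ' (l : ℕ) : ∀ s : Finset (ℕ × ℕ),
    levelM s (l + 1) = (childrenM s).bind (fun c => levelM c l) := by
  induction l with
  | zero =>
    intro s
    show ({s} : Multiset _).bind childrenM = _
    rw [Multiset.singleton_bind]
    have : (fun c : Finset (ℕ × ℕ) => levelM c 0) = fun c => {c} := rfl
    rw [this]
    refine Eq.symm ?_
    simpa using Multiset.bind_singleton (childrenM s) id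
  | succ l ih =>
    intro s
    show (levelM s (l + 1)).bind childrenM = _
    rw [ih s, Multiset.bind_assoc]
    rfl

lemma posFst_matching {n : ℕ} {s : Finset (ℕ × ℕ)} (h : IsMatching n s) : PosFst s :=
  fun e he => (h.2.1 e he).2.1

lemma icc_reindex (n : ℕ) :
    (Finset.Icc 2 (2 * n + 2)).val = (Finset.Icc 1 (2 * n + 1)).val.map (· + 1) := by
  have := Finset.map_add_right_Icc 1 (2 * n + 1) 1
  rw [← this, Finset.map_val]
  rfl

lemma key (l : ℕ) : ∀ s : Finset (ℕ × ℕ), PosFst s →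
    (levelM s l).map caStat = lvlA l (caStat s) (Dms s) := by
  induction l with
  | zero => intro s _; simp [levelM, lvlA]
  | succ l ih =>
    intro s hs
    rw [levelM_succ', Multiset.map_bind, lvlA]
    rw [childrenM, Multiset.bind_map]
    rw [Dms_card]
    have hhalf : (2 * s.card + 1 + 1) / 2 = s.card + 1 := by omega
    rw [hhalf]
    conv_rhs => rw [Dms, Multiset.bind_map]
    rw [icc_reindex s.card, Multiset.bind_map]
    apply Multiset.bind_congr
    intro v hv
    rw [Finset.mem_val, Finset.mem_Icc] at hv
    have hx1 : 2 ≤ v + 1 := by omega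
    have hx2 : v + 1 ≤ 2 * s.card + 2 := by omega
    rw [ih _ (posFst_addFirst _ hs), caStat_addFirst hx1 hs, Dms_addFirst hs hx1 hx2]
    have hsub : v + 1 - 1 = v := by omega
    rw [hsub]
    rfl

theorem main (n : ℕ) (M N : Finset (ℕ × ℕ)) (hM : IsMatching n M) (hN : IsMatching n N)
    (h0 : (levelM M 0).map caStat = (levelM N 0).map caStat)
    (h1 : (levelM M 1).map caStat = (levelM N 1).map caStat) :
    ∀ l : ℕ, (levelM M l).map caStat = (levelM N l).map caStat := by
  have hMp := posFst_matching hM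
  have hNp := posFst_matching hN
  have hca : caStat M = caStat N := by
    have : ({caStat M} : Multiset ℕ) = {caStat N} := by
      simpa [levelM] using h0
    exact Multiset.singleton_inj.mp this
  have hD : Dms M = Dms N := by
    have e1 := key 1 M hMp
    have e2 := key 1 N hNp
    rw [e1, e2] at h1
    simp only [lvlA, Multiset.bind_singleton] at h1
    rw [hca] at h1
    exact Multiset.map_injective (fun a b h => by omega) h1
  intro l
  rw [key l M hMp, key l N hNp, hca, hD]
end CaProof2


/-- if the camel statistic `ca` coincides (as a multiset of values) on `T(M,l)`
and `T(N,l)` for `l = 0, 1`, then it coincides for every `l ≥ 0`. -/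
theorem ca_coincide_of_first_two_levels
    (n : ℕ) (M N : Finset (ℕ × ℕ)) (hM : IsMatching n M) (hN : IsMatching n N)
    (h0 : (levelM M 0).map caStat = (levelM N 0).map caStat)
    (h1 : (levelM M 1).map caStat = (levelM N 1).map caStat) :
    ∀ l : ℕ, (levelM M l).map caStat = (levelM N l).map caStat :=
  CaProof2.main n M N hM hN h0 h1
end
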